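/- arXiv:2201.05317 — 10 statements merged into one kernel-verified Lean document; each statement's English description precedes it below -/
import Mathlib

section
/- Let k ≥ 2 and let G = T_n⟨t_1, …, t_k⟩ be a claw-free Toeplitz graph with n > t_{k−1} + t_k. Then G is a cocoonery, i.e., t_i = i·t_1 for every i with 1 ≤ i ≤ k. -/
def toeplitzGraph (n k : ℕ) (t : ℕ → ℕ) : SimpleGraph (Fin n) where
  Adj x y := x ≠ y ∧ ∃ i, 1 ≤ i ∧ i ≤ k ∧ ((x : ℤ) - (y : ℤ)).natAbs = t i
  symm := by
    constructor
    rintro x y ⟨hxy, i, h1, h2, h3⟩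
    exact ⟨hxy.symm, i, h1, h2, by omega⟩
  loopless := by constructor; rintro x ⟨hx, -⟩; exact hx rfl

def HasClaw {V : Type*} (G : SimpleGraph V) : Prop :=
  ∃ a b c d : V, G.Adj a b ∧ G.Adj a c ∧ G.Adj a d ∧
    b ≠ c ∧ b ≠ d ∧ c ≠ d ∧ ¬ G.Adj b c ∧ ¬ G.Adj b d ∧ ¬ G.Adj c d

def ClawFree {V : Type*} (G : SimpleGraph V) : Prop := ¬ HasClaw G

lemma claw3 (n k : ℕ) (t : ℕ → ℕ) (hcf : ClawFree (toeplitzGraph n k t))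
    (a b c d : ℕ) (ha : a < n) (hb : b < n) (hc : c < n) (hd : d < n)
    (hab : ∃ i, 1 ≤ i ∧ i ≤ k ∧ ((a:ℤ) - b).natAbs = t i)
    (hac : ∃ i, 1 ≤ i ∧ i ≤ k ∧ ((a:ℤ) - c).natAbs = t i)
    (had : ∃ i, 1 ≤ i ∧ i ≤ k ∧ ((a:ℤ) - d).natAbs = t i)
    (hab' : a ≠ b) (hac' : a ≠ c) (had' : a ≠ d)
    (hbc : b ≠ c) (hbd : b ≠ d) (hcd : c ≠ d) :
    (∃ i, 1 ≤ i ∧ i ≤ k ∧ ((b:ℤ) - c).natAbs = t i) ∨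
    (∃ i, 1 ≤ i ∧ i ≤ k ∧ ((b:ℤ) - d).natAbs = t i) ∨
    (∃ i, 1 ≤ i ∧ i ≤ k ∧ ((c:ℤ) - d).natAbs = t i) := by
  by_contra h
  push_neg at h
  obtain ⟨h1, h2, h3⟩ := h
  apply hcf
  refine ⟨⟨a,ha⟩, ⟨b,hb⟩, ⟨c,hc⟩, ⟨d,hd⟩,
    ⟨Fin.ne_of_val_ne hab', by simpa using hab⟩,
    ⟨Fin.ne_of_val_ne hac', by simpa using hac⟩,
    ⟨Fin.ne_of_val_ne had', by simpa using had⟩,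
    Fin.ne_of_val_ne hbc, Fin.ne_of_val_ne hbd, Fin.ne_of_val_ne hcd,
    ?_, ?_, ?_⟩
  · rintro ⟨-, i, hi1, hi2, hi3⟩
    exact h1 i hi1 hi2 (by simpa using hi3)
  · rintro ⟨-, i, hi1, hi2, hi3⟩
    exact h2 i hi1 hi2 (by simpa using hi3)
  · rintro ⟨-, i, hi1, hi2, hi3⟩
    exact h3 i hi1 hi2 (by simpa using hi3)

/-- If `T_n⟨t 1, …, t k⟩` (`k ≥ 2`) is claw-free with `n > t (k-1) + t k`,
then it is a cocoonery, i.e. `t i = i * t 1` for all `1 ≤ i ≤ k`. -/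
theorem stmt_2 (n k : ℕ) (t : ℕ → ℕ) (hk : 2 ≤ k)
    (hpos : 0 < t 1) (hmono : StrictMonoOn t (Set.Icc 1 k)) (htn : t k < n)
    (hcf : ClawFree (toeplitzGraph n k t))
    (hn : t (k - 1) + t k < n) :
    ∀ i, 1 ≤ i → i ≤ k → t i = i * t 1 := by
  have tlt : ∀ i j, 1 ≤ i → i < j → j ≤ k → t i < t j := fun i j h1 h2 h3 =>
    hmono ⟨h1, by omega⟩ ⟨by omega, h3⟩ h2
  have tmono : ∀ i j, 1 ≤ i → i ≤ j → j ≤ k → t i ≤ t j := by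
    intro i j h1 h2 h3
    rcases eq_or_lt_of_le h2 with h | h
    · rw [h]
    · exact le_of_lt (tlt i j h1 h h3)
  have tpos : ∀ i, 1 ≤ i → i ≤ k → 0 < t i := fun i h1 h2 =>
    lt_of_lt_of_le hpos (tmono 1 i le_rfl h1 h2)
  -- Step A : for 1 ≤ i < j ≤ k-1, t j - t i is a value of t
  have stepA : ∀ i j, 1 ≤ i → i < j → j + 1 ≤ k →
      ∃ m, 1 ≤ m ∧ m ≤ k ∧ t j = t i + t m := by
    intro i j hi1 hij hjk
    have hij' : t i < t j := tlt i j hi1 hij (by omega)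
    have hjk1 : t j ≤ t (k-1) := tmono j (k-1) (by omega) (by omega) (by omega)
    have hbound : t j + t k < n := by omega
    have htkpos : 0 < t k := tpos k (by omega) le_rfl
    have htipos : 0 < t i := tpos i hi1 (by omega)
    have := claw3 n k t hcf (t j) (t j + t k) (t j - t i) 0
      (by omega) (by omega) (by omega) (by omega)
      ⟨k, by omega, le_rfl, by omega⟩
      ⟨i, hi1, by omega, by omega⟩
      ⟨j, by omega, by omega, by omega⟩
      (by omega) (by omega) (by omega) (by omega) (by omega) (by omega)
    rcases this with ⟨m, hm1, hm2, hm3⟩ | ⟨m, hm1, hm2, hm3⟩ | ⟨m, hm1, hm2, hm3⟩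
    · have := tmono m k hm1 hm2 le_rfl; omega
    · have := tmono m k hm1 hm2 le_rfl; omega
    · exact ⟨m, hm1, hm2, by omega⟩
  -- Step B : t j = j * t 1 for 1 ≤ j ≤ k-1
  have stepB : ∀ j, 1 ≤ j → j + 1 ≤ k → t j = j * t 1 := by
    intro j
    induction j with
    | zero => omega
    | succ p ih =>
      intro _ hpk
      rcases Nat.eq_zero_or_pos p with hp0 | hp
      · subst hp0; simp
      have hIH : t p = p * t 1 := ih hp (by omega)
      obtain ⟨m1, hm11, hm12, hm13⟩ := stepA 1 (p+1) le_rfl (by omega) hpk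
      obtain ⟨m2, hm21, hm22, hm23⟩ := stepA p (p+1) hp (by omega) hpk
      have h1 : t 1 ≤ t m2 := tmono 1 m2 le_rfl hm21 hm22
      -- t (p+1) ≥ t p + t 1, so t m1 ≥ t p, hence m1 ≥ p; also t m1 < t (p+1) so m1 ≤ p
      have hge : t p ≤ t m1 := by omega
      have hlt : t m1 < t (p+1) := by
        have := tpos 1 le_rfl (by omega); omega
      have hm1p : p ≤ m1 := by
        by_contra hc
        have := tlt m1 p hm11 (by omega) (by omega); omega
      have hm1p' : m1 ≤ p := by
        by_contra hc
        have := tmono (p+1) m1 (by omega) (by omega) hm12; omega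
      have : m1 = p := le_antisymm hm1p' hm1p
      subst this
      rw [hm13, hIH]; ring
  -- cancellation helper
  have hcancel : ∀ x y : ℕ, x * t 1 = y * t 1 → x = y := fun x y h =>
    Nat.eq_of_mul_eq_mul_right hpos h
  -- Step C : t k = k * t 1
  have stepC : t k = k * t 1 := by
    by_contra htk
    have hk1 : t (k-1) = (k-1) * t 1 := stepB (k-1) (by omega) (by omega)
    have hk1lt : t (k-1) < t k := tlt (k-1) k (by omega) (by omega) le_rfl
    have hk1ge : t 1 ≤ t (k-1) := tmono 1 (k-1) le_rfl (by omega) (by omega)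
    have htkpos : 0 < t k := tpos k (by omega) le_rfl
    -- Claw 1: center t 1, leaves t 1 + t k, t 1 + t (k-1), 0
    have C1 := claw3 n k t hcf (t 1) (t 1 + t k) (t 1 + t (k-1)) 0
      (by omega) (by omega) (by omega) (by omega)
      ⟨k, by omega, le_rfl, by omega⟩
      ⟨k-1, by omega, by omega, by omega⟩
      ⟨1, le_rfl, by omega, by omega⟩
      (by omega) (by omega) (by omega) (by omega) (by omega) (by omega)
    rcases C1 with ⟨m, hm1, hm2, hm3⟩ | ⟨m, hm1, hm2, hm3⟩ | ⟨m, hm1, hm2, hm3⟩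
    · -- t m = t k - t (k-1)
      have hmeq : t k = t (k-1) + t m := by omega
      have hmltk : m < k := by
        rcases Nat.lt_or_ge m k with h | h
        · exact h
        · exfalso
          have hmk : m = k := by omega
          rw [hmk] at hmeq
          have := tpos (k-1) (by omega) (by omega); omega
      have hmv : t m = m * t 1 := stepB m hm1 (by omega)
      rcases Nat.lt_or_ge m 2 with hm2' | hm2'
      · -- m = 1 : t k = (k-1)*t1 + t1 = k*t1, contradiction
        have hm1' : m = 1 := by omega
        rw [hm1'] at hmeq
        have e1 : (k-1+1) * t 1 = (k-1) * t 1 + 1 * t 1 := add_mul _ _ _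
        have e2 : k - 1 + 1 = k := by omega
        rw [e2] at e1
        exact absurd (by omega : t k = k * t 1) htk
      · -- m ≥ 2, so k ≥ 3; build claw 2
        have hk3 : 3 ≤ k := by omega
        have hm1v : t (m-1) = (m-1) * t 1 := stepB (m-1) (by omega) (by omega)
        have htkv : t k = (k-1+m) * t 1 := by
          rw [hmeq, hk1, hmv, ← add_mul]
        have hm1lt : t (m-1) < t k := tlt (m-1) k (by omega) (by omega) le_rfl
        have hm1pos : 0 < t (m-1) := tpos (m-1) (by omega) (by omega)
        have C2 := claw3 n k t hcf (t (k-1)) (t (k-1) + t k) (t (k-1) + t (m-1)) 0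
          (by omega) (by omega) (by omega) (by omega)
          ⟨k, by omega, le_rfl, by omega⟩
          ⟨m-1, by omega, by omega, by omega⟩
          ⟨k-1, by omega, by omega, by omega⟩
          (by omega) (by omega) (by omega) (by omega) (by omega)
          (by have := tpos (m-1) (by omega) (by omega); omega)
        rcases C2 with ⟨m', hm'1, hm'2, hm'3⟩ | ⟨m', hm'1, hm'2, hm'3⟩ | ⟨m', hm'1, hm'2, hm'3⟩
        · -- t m' = t k - t (m-1) = k * t 1
          have hv : t m' = k * t 1 := by
            have : t m' = t k - t (m-1) := by omega
            rw [this, htkv, hm1v, ← Nat.sub_mul]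
            congr 1
            omega
          rcases Nat.lt_or_ge m' k with hc | hc
          · have := stepB m' hm'1 (by omega)
            have := hcancel m' k (by omega)
            omega
          · have hm'k : m' = k := by omega
            rw [hm'k] at hv
            exact htk hv
        · -- t m' = t (k-1) + t k = (2k-2+m) * t 1
          have hv : t m' = (2*k-2+m) * t 1 := by
            have : t m' = t (k-1) + t k := by omega
            rw [this, htkv, hk1, ← add_mul]
            congr 1
            omega
          rcases Nat.lt_or_ge m' k with hc | hc
          · have h1 := stepB m' hm'1 (by omega)
            have := hcancel m' (2*k-2+m) (by omega)
            omega
          · have hm'k : m' = k := by omega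
            rw [hm'k] at hv
            have := hcancel (k-1+m) (2*k-2+m) (by omega)
            omega
        · -- t m' = t (k-1) + t (m-1) = (k+m-2) * t 1
          have hv : t m' = (k+m-2) * t 1 := by
            have : t m' = t (k-1) + t (m-1) := by omega
            rw [this, hk1, hm1v, ← add_mul]
            congr 1
            omega
          rcases Nat.lt_or_ge m' k with hc | hc
          · have h1 := stepB m' hm'1 (by omega)
            have := hcancel m' (k+m-2) (by omega)
            omega
          · have hm'k : m' = k := by omega
            rw [hm'k] at hv
            have := hcancel (k-1+m) (k+m-2) (by omega)
            omega
    · -- t m = t 1 + t k > t k : impossible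
      have := tmono m k hm1 hm2 le_rfl; omega
    · -- t m = t 1 + t (k-1) = k * t 1
      have hv : t m = k * t 1 := by
        have e1 : (k-1+1) * t 1 = (k-1) * t 1 + 1 * t 1 := add_mul _ _ _
        have e2 : k - 1 + 1 = k := by omega
        rw [e2] at e1
        omega
      rcases Nat.lt_or_ge m k with hc | hc
      · have h1 := stepB m hm1 (by omega)
        have := hcancel m k (by omega)
        omega
      · have hmk : m = k := by omega
        rw [hmk] at hv
        exact htk hv
  -- conclude
  intro i hi1 hik
  rcases Nat.lt_or_ge i k with h | h
  · exact stepB i hi1 (by omega)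
  · have : i = k := by omega
    subst this
    exact stepC
end

section
/- Let k ≥ 2 and let G = T_n⟨t_1, …, t_k⟩ be a Toeplitz graph with n > t_{k−1} + t_k. Then the following are equivalent: (i) G is claw-free; (ii) t_i = i·t_1 for all 1 ≤ i ≤ k (i.e., G is a cocoonery); (iii) the clique number of G equals k + 1. -/
lemma hasClaw_of (n k : ℕ) (t : ℕ → ℕ) (p q r : ℕ)
    (hp : ∃ i, 1 ≤ i ∧ i ≤ k ∧ t i = p) (hq : ∃ i, 1 ≤ i ∧ i ≤ k ∧ t i = q)
    (hr : ∃ i, 1 ≤ i ∧ i ≤ k ∧ t i = r)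
    (hqp : q < p) (h0q : 0 < q) (h0r : 0 < r)
    (hpq : ∀ i, 1 ≤ i → i ≤ k → t i ≠ p - q)
    (hpr : ∀ i, 1 ≤ i → i ≤ k → t i ≠ p + r)
    (hqr : ∀ i, 1 ≤ i → i ≤ k → t i ≠ q + r)
    (hlt : r + p < n) : HasClaw (toeplitzGraph n k t) := by
  obtain ⟨i, hi1, hi2, hi3⟩ := hp
  obtain ⟨j, hj1, hj2, hj3⟩ := hq
  obtain ⟨l, hl1, hl2, hl3⟩ := hr
  refine ⟨⟨r, by omega⟩, ⟨r + p, by omega⟩, ⟨r + q, by omega⟩, ⟨0, by omega⟩,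
    ⟨?_, i, hi1, hi2, ?_⟩, ⟨?_, j, hj1, hj2, ?_⟩, ⟨?_, l, hl1, hl2, ?_⟩,
    ?_, ?_, ?_, ?_, ?_, ?_⟩
  all_goals simp only [ne_eq, Fin.mk.injEq, toeplitzGraph, Fin.val_mk,
    not_and, not_exists]
  · omega
  · omega
  · omega
  · omega
  · omega
  · omega
  · omega
  · omega
  · omega
  · intro _ i' h1 h2 h3
    have := hpq i' h1 h2
    omega
  · intro _ i' h1 h2 h3
    have := hpr i' h1 h2
    omega
  · intro _ i' h1 h2 h3
    have := hqr i' h1 h2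
    omega

lemma mult_of_adj (n k : ℕ) (t : ℕ → ℕ)
    (hc : ∀ i, 1 ≤ i → i ≤ k → t i = i * t 1) {a b : Fin n}
    (h : ∃ i, 1 ≤ i ∧ i ≤ k ∧ ((a : ℤ) - (b : ℤ)).natAbs = t i) :
    ∃ m : ℤ, (a : ℤ) - b = m * t 1 ∧ 1 ≤ m.natAbs ∧ m.natAbs ≤ k := by
  obtain ⟨i, hi1, hi2, hi3⟩ := h
  rw [hc i hi1 hi2] at hi3
  rcases Int.natAbs_eq ((a : ℤ) - b) with h | h
  · refine ⟨i, ?_, by simpa using hi1, by simpa using hi2⟩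
    rw [h, hi3]; push_cast; ring
  · refine ⟨-i, ?_, by simpa using hi1, by simpa using hi2⟩
    rw [h, hi3]; push_cast; ring

lemma noclaw (n k : ℕ) (t : ℕ → ℕ) (hpos : 0 < t 1)
    (hc : ∀ i, 1 ≤ i → i ≤ k → t i = i * t 1) : ¬ HasClaw (toeplitzGraph n k t) := by
  rintro ⟨a, b, c, d, ⟨hab, hb⟩, ⟨hac, hcc⟩, ⟨had, hd⟩, hbc, hbd, hcd, nbc, nbd, ncd⟩
  simp only [toeplitzGraph, not_and, not_exists] at nbc nbd ncd
  obtain ⟨mb, hmb, hmb1, hmb2⟩ := mult_of_adj n k t hc hb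
  obtain ⟨mc, hmc, hmc1, hmc2⟩ := mult_of_adj n k t hc hcc
  obtain ⟨md, hmd, hmd1, hmd2⟩ := mult_of_adj n k t hc hd
  have key : ∀ x y : Fin n, ∀ mx my : ℤ, (a : ℤ) - x = mx * t 1 → (a : ℤ) - y = my * t 1 →
      x ≠ y → (∀ i, 1 ≤ i → i ≤ k → ¬ ((x : ℤ) - (y : ℤ)).natAbs = t i) →
      k < (mx - my).natAbs := by
    intro x y mx my hx hy hxy hn
    have hxy2 : (x : ℤ) - y = (my - mx) * t 1 := by
      have h' : (x : ℤ) - y = ((a : ℤ) - y) - ((a : ℤ) - x) := by ring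
      rw [h', hx, hy]; ring
    by_contra hle
    push_neg at hle
    have hne : my ≠ mx := by
      intro he
      apply hxy
      apply Fin.ext
      have h0 : (x : ℤ) - y = 0 := by rw [hxy2, he]; ring
      omega
    refine hn (my - mx).natAbs (by omega) (by omega) ?_
    rw [hc _ (by omega) (by omega), hxy2, Int.natAbs_mul]
    simp
  have k1 := key b c mb mc hmb hmc hbc (nbc hbc)
  have k2 := key b d mb md hmb hmd hbd (nbd hbd)
  have k3 := key c d mc md hmc hmd hcd (ncd hcd)
  omega

lemma t_mono_le (k : ℕ) (t : ℕ → ℕ) (hmono : StrictMonoOn t (Set.Icc 1 k))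
    {a b : ℕ} (h1 : 1 ≤ a) (hab : a ≤ b) (h2 : b ≤ k) : t a ≤ t b := by
  rcases eq_or_lt_of_le hab with h | h
  · rw [h]
  · exact le_of_lt (hmono ⟨h1, by omega⟩ ⟨by omega, h2⟩ h)

lemma t_lt_idx (k : ℕ) (t : ℕ → ℕ) (hmono : StrictMonoOn t (Set.Icc 1 k))
    {a b : ℕ} (h1 : 1 ≤ a) (h2 : a ≤ k) (h1' : 1 ≤ b) (h2' : b ≤ k)
    (h : t a < t b) : a < b :=
  (hmono.lt_iff_lt ⟨h1, h2⟩ ⟨h1', h2'⟩).mp h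

-- upper bound on clique sizes
lemma clique_bound (n k : ℕ) (t : ℕ → ℕ) {m : ℕ} {s : Finset (Fin n)}
    (hs : (toeplitzGraph n k t).IsNClique m s) : m ≤ k + 1 := by
  rcases s.eq_empty_or_nonempty with rfl | hne
  · have := hs.2; simp at this; omega
  obtain ⟨v₀, hv₀, hminv⟩ := s.exists_min_image (fun w => (w : ℕ)) hne
  have hmaps : ∀ w ∈ s, (w : ℕ) - (v₀ : ℕ) ∈ insert 0 ((Finset.Icc 1 k).image t) := by
    intro w hw
    rcases eq_or_ne w v₀ with rfl | hne'
    · simp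
    · have hadj := hs.1 hw hv₀ hne'
      obtain ⟨-, i, h1, h2, h3⟩ := hadj
      have hle : (v₀ : ℕ) ≤ (w : ℕ) := hminv w hw
      refine Finset.mem_insert_of_mem (Finset.mem_image.mpr ⟨i, Finset.mem_Icc.mpr ⟨h1, h2⟩, ?_⟩)
      omega
  have hinj : Set.InjOn (fun w : Fin n => (w : ℕ) - (v₀ : ℕ)) s := by
    intro x hx y hy hxy
    have hx' : (v₀ : ℕ) ≤ (x : ℕ) := hminv x hx
    have hy' : (v₀ : ℕ) ≤ (y : ℕ) := hminv y hy
    apply Fin.ext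
    simp only at hxy
    omega
  have := Finset.card_le_card_of_injOn _ hmaps hinj
  have hcard : (insert 0 ((Finset.Icc 1 k).image t)).card ≤ k + 1 := by
    refine le_trans (Finset.card_insert_le _ _) ?_
    have := Finset.card_image_le (s := Finset.Icc 1 k) (f := t)
    simp [Nat.card_Icc] at this ⊢
    omega
  rw [hs.2] at this
  omega

-- clique of size k+1 in a cocoonery
lemma cocoon_clique (n k : ℕ) (t : ℕ → ℕ) (hpos : 0 < t 1) (htn : t k < n)
    (hc : ∀ i, 1 ≤ i → i ≤ k → t i = i * t 1) (hk : 1 ≤ k) :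
    ∃ s, (toeplitzGraph n k t).IsNClique (k + 1) s := by
  have hbound : ∀ i : ℕ, i ≤ k → i * t 1 < n := by
    intro i hi
    have h1 : i * t 1 ≤ k * t 1 := Nat.mul_le_mul_right _ hi
    have h2 : t k = k * t 1 := hc k hk le_rfl
    omega
  refine ⟨(Finset.range (k + 1)).image (fun i => (⟨i * t 1 % n, Nat.mod_lt _ (by omega)⟩ : Fin n)), ?_, ?_⟩
  · rintro x hx y hy hxy
    simp only [Finset.coe_image, Set.mem_image, Finset.mem_coe, Finset.mem_range] at hx hy
    obtain ⟨i, hi, rfl⟩ := hx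
    obtain ⟨j, hj, rfl⟩ := hy
    have hi' : i * t 1 % n = i * t 1 := Nat.mod_eq_of_lt (hbound i (by omega))
    have hj' : j * t 1 % n = j * t 1 := Nat.mod_eq_of_lt (hbound j (by omega))
    have hij : i ≠ j := by
      intro h; exact hxy (by rw [h])
    refine ⟨hxy, ?_⟩
    rcases Nat.lt_or_ge i j with h | h
    · refine ⟨j - i, by omega, by omega, ?_⟩
      rw [hc (j - i) (by omega) (by omega)]
      have h1 : (j - i) * t 1 = j * t 1 - i * t 1 := Nat.sub_mul _ _ _
      have h2 : i * t 1 ≤ j * t 1 := Nat.mul_le_mul_right _ (by omega)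
      simp only [Fin.val_mk, hi', hj']
      omega
    · refine ⟨i - j, by omega, by omega, ?_⟩
      rw [hc (i - j) (by omega) (by omega)]
      have h1 : (i - j) * t 1 = i * t 1 - j * t 1 := Nat.sub_mul _ _ _
      have h2 : j * t 1 ≤ i * t 1 := Nat.mul_le_mul_right _ (by omega)
      simp only [Fin.val_mk, hi', hj']
      omega
  · rw [Finset.card_image_of_injOn, Finset.card_range]
    intro x hx y hy hxy
    simp only [Finset.mem_coe, Finset.mem_range] at hx hy
    simp only [Fin.mk.injEq] at hxy
    have hx' : x * t 1 % n = x * t 1 := Nat.mod_eq_of_lt (hbound x (by omega))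
    have hy' : y * t 1 % n = y * t 1 := Nat.mod_eq_of_lt (hbound y (by omega))
    rw [hx', hy'] at hxy
    exact Nat.eq_of_mul_eq_mul_right hpos hxy

lemma claw_of_not (n k : ℕ) (t : ℕ → ℕ) (hk : 2 ≤ k) (hpos : 0 < t 1)
    (hmono : StrictMonoOn t (Set.Icc 1 k)) (hn : t (k - 1) + t k < n)
    (hnc : ¬ ∀ i, 1 ≤ i → i ≤ k → t i = i * t 1) : HasClaw (toeplitzGraph n k t) := by
  push_neg at hnc
  obtain ⟨j₀, hj₀1, hj₀2, hj₀3⟩ := hnc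
  have hdec : ∀ m : ℕ, Decidable (1 ≤ m ∧ m ≤ k ∧ t m ≠ m * t 1) := fun m => by
    infer_instance
  have hex : ∃ j, 1 ≤ j ∧ j ≤ k ∧ t j ≠ j * t 1 := ⟨j₀, hj₀1, hj₀2, hj₀3⟩
  classical
  obtain ⟨j, hj, hmin0⟩ : ∃ j, (1 ≤ j ∧ j ≤ k ∧ t j ≠ j * t 1) ∧
      ∀ m, m < j → ¬(1 ≤ m ∧ m ≤ k ∧ t m ≠ m * t 1) :=
    ⟨Nat.find hex, Nat.find_spec hex, fun m hm => Nat.find_min hex hm⟩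
  obtain ⟨hj1, hj2, hj3⟩ := hj
  have hmin : ∀ m, m < j → 1 ≤ m → m ≤ k → t m = m * t 1 := by
    intro m hm h1 h2
    by_contra hne
    exact hmin0 m hm ⟨h1, h2, hne⟩
  -- basic monotonicity facts
  have hmem : ∀ i, 1 ≤ i → i ≤ k → i ∈ Set.Icc 1 k := fun i h1 h2 => ⟨h1, h2⟩
  have hlb : ∀ i, 1 ≤ i → i ≤ k → t 1 ≤ t i := by
    intro i h1 h2
    rcases eq_or_lt_of_le h1 with h | h
    · rw [← h]
    · exact le_of_lt (hmono (hmem 1 le_rfl (by omega)) (hmem i h1 h2) h)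
  have hub : ∀ i, 1 ≤ i → i ≤ k → t i ≤ t k := by
    intro i h1 h2
    rcases eq_or_lt_of_le h2 with h | h
    · rw [h]
    · exact le_of_lt (hmono (hmem i h1 h2) (hmem k (by omega) le_rfl) h)
  have hj2' : 2 ≤ j := by
    by_contra h
    have hj1' : j = 1 := by omega
    rw [hj1'] at hj3
    simp at hj3
  have hjm1 : t (j - 1) = (j - 1) * t 1 := hmin (j - 1) (by omega) (by omega) (by omega)
  have hstep : t (j - 1) < t j :=
    hmono (hmem (j - 1) (by omega) (by omega)) (hmem j hj1 hj2) (by omega)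
  have hltlt : ∀ i i', 1 ≤ i → i ≤ k → 1 ≤ i' → i' ≤ k → t i < t i' → i < i' := by
    intro i i' h1 h2 h1' h2' hlt
    exact (hmono.lt_iff_lt (hmem i h1 h2) (hmem i' h1' h2')).mp hlt
  rcases Nat.lt_or_ge (t j) (t (j - 1) + t 1) with hA | hB
  · -- Case A : t j < t (j-1) + t 1
    rcases Nat.lt_or_ge j k with hjk | hjk
    · -- j < k
      refine hasClaw_of n k t (t j) (t (j - 1)) (t k)
        ⟨j, hj1, hj2, rfl⟩ ⟨j - 1, by omega, by omega, rfl⟩ ⟨k, by omega, le_rfl, rfl⟩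
        hstep (by have := hlb (j - 1) (by omega) (by omega); omega)
        (by have := hlb k (by omega) le_rfl; omega) ?_ ?_ ?_ ?_
      · intro i h1 h2
        have := hlb i h1 h2; omega
      · intro i h1 h2
        have := hub i h1 h2
        have := hlb j hj1 hj2; omega
      · intro i h1 h2
        have := hub i h1 h2
        have := hlb (j - 1) (by omega) (by omega); omega
      · have h1 : t j ≤ t (k - 1) := by
          rcases Nat.eq_or_lt_of_le (show j ≤ k - 1 by omega) with h | h
          · rw [h]
          · exact le_of_lt (hmono (hmem j hj1 hj2) (hmem (k - 1) (by omega) (by omega)) h)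
        omega
    · -- j = k
      have hjk' : j = k := by omega
      subst hjk'
      refine hasClaw_of n j t (t j) (t (j - 1)) (t (j - 1))
        ⟨j, hj1, hj2, rfl⟩ ⟨j - 1, by omega, by omega, rfl⟩ ⟨j - 1, by omega, by omega, rfl⟩
        hstep (by have := hlb (j - 1) (by omega) (by omega); omega)
        (by have := hlb (j - 1) (by omega) (by omega); omega) ?_ ?_ ?_ (by omega)
      · intro i h1 h2
        have := hlb i h1 h2; omega
      · intro i h1 h2
        have := hub i h1 h2
        have := hlb (j - 1) (by omega) (by omega); omega
      · -- t i ≠ 2 * t (j-1) = 2*(j-1)*t1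
        intro i h1 h2
        rcases Nat.lt_or_ge i j with h | h
        · have := hmin i h h1 h2
          -- t i = i * t 1, i ≤ j - 1, need i*t1 ≠ 2*(j-1)*t1
          have h2' : i ≤ j - 1 := by omega
          have : i * t 1 < 2 * ((j - 1) * t 1) := by
            have : i < 2 * (j - 1) := by omega
            calc i * t 1 < 2 * (j - 1) * t 1 := by
                  exact (Nat.mul_lt_mul_right hpos).mpr this
              _ = 2 * ((j - 1) * t 1) := by ring
          omega
        · have hik : i = j := by omega
          subst hik
          have h1' : t 1 ≤ (i - 1) * t 1 := Nat.le_mul_of_pos_left _ (by omega)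
          omega
  · -- Case B : t j > t (j-1) + t 1  (note t j ≠ j * t 1 = t(j-1)+t1)
    have hB' : t (j - 1) + t 1 < t j := by
      rcases Nat.eq_or_lt_of_le hB with h | h
      · exfalso; apply hj3; rw [← h, hjm1]; have : j - 1 + 1 = j := by omega
        calc (j-1) * t 1 + t 1 = (j - 1 + 1) * t 1 := by ring
          _ = j * t 1 := by rw [this]
      · exact h
    have hgap : ∀ i, 1 ≤ i → i ≤ k → t i ≠ t j - t 1 := by
      intro i h1 h2 he
      have hlt1 : t i < t j := by omega
      have hgt1 : t (j - 1) < t i := by omega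
      have := hltlt i j h1 h2 hj1 hj2 hlt1
      have := hltlt (j - 1) i (by omega) (by omega) h1 h2 hgt1
      omega
    rcases Nat.lt_or_ge j k with hjk | hjk
    · refine hasClaw_of n k t (t j) (t 1) (t k)
        ⟨j, hj1, hj2, rfl⟩ ⟨1, le_rfl, by omega, rfl⟩ ⟨k, by omega, le_rfl, rfl⟩
        (by omega) hpos (by have := hlb k (by omega) le_rfl; omega) hgap ?_ ?_ ?_
      · intro i h1 h2
        have := hub i h1 h2
        have := hlb j hj1 hj2; omega
      · intro i h1 h2
        have := hub i h1 h2; omega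
      · have h1 : t j ≤ t (k - 1) := by
          rcases Nat.eq_or_lt_of_le (show j ≤ k - 1 by omega) with h | h
          · rw [h]
          · exact le_of_lt (hmono (hmem j hj1 hj2) (hmem (k - 1) (by omega) (by omega)) h)
        omega
    · have hjk' : j = k := by omega
      subst hjk'
      refine hasClaw_of n j t (t j) (t 1) (t (j - 1))
        ⟨j, hj1, hj2, rfl⟩ ⟨1, le_rfl, by omega, rfl⟩ ⟨j - 1, by omega, by omega, rfl⟩
        (by omega) hpos (by have := hlb (j - 1) (by omega) (by omega); omega) hgap ?_ ?_ (by omega)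
      · intro i h1 h2
        have := hub i h1 h2
        have := hlb (j - 1) (by omega) (by omega); omega
      · -- t i ≠ t 1 + t (j-1) = j * t 1
        intro i h1 h2
        rw [hjm1]
        rcases Nat.lt_or_ge i j with h | h
        · have := hmin i h h1 h2
          have : i * t 1 < j * t 1 := (Nat.mul_lt_mul_right hpos).mpr h
          have hje : t 1 + (j - 1) * t 1 = j * t 1 := by
            have h' : j - 1 + 1 = j := by omega
            calc t 1 + (j - 1) * t 1 = (j - 1 + 1) * t 1 := by ring
              _ = j * t 1 := by rw [h']
          omega
        · have hik : i = j := by omega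
          subst hik
          have hje : t 1 + (i - 1) * t 1 = i * t 1 := by
            have h' : i - 1 + 1 = i := by omega
            calc t 1 + (i - 1) * t 1 = (i - 1 + 1) * t 1 := by ring
              _ = i * t 1 := by rw [h']
          omega

lemma cocoon_of_clique (n k : ℕ) (t : ℕ → ℕ) (hk : 1 ≤ k) (hpos : 0 < t 1)
    (hmono : StrictMonoOn t (Set.Icc 1 k)) {s : Finset (Fin n)}
    (hs : (toeplitzGraph n k t).IsNClique (k + 1) s) :
    ∀ i, 1 ≤ i → i ≤ k → t i = i * t 1 := by
  have hcard : s.card = k + 1 := hs.2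
  set e := s.orderIsoOfFin hcard with he
  set D : ℕ → ℕ := fun i => if h : i < k + 1 then ((e ⟨i, h⟩ : Fin n) : ℕ) else 0 with hD
  have hDmono : ∀ i j, i < j → j ≤ k → D i < D j := by
    intro i j hij hjk
    have hi : i < k + 1 := by omega
    have hj : j < k + 1 := by omega
    simp only [hD, dif_pos hi, dif_pos hj]
    have h1 : e ⟨i, hi⟩ < e ⟨j, hj⟩ := e.strictMono (Fin.mk_lt_mk.mpr hij)
    exact h1
  have hadj : ∀ i j, i < j → j ≤ k → ∃ m, 1 ≤ m ∧ m ≤ k ∧ t m = D j - D i := by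
    intro i j hij hjk
    have hi : i < k + 1 := by omega
    have hj : j < k + 1 := by omega
    have hxs : ((e ⟨i, hi⟩ : Fin n)) ∈ s := (e ⟨i, hi⟩).2
    have hys : ((e ⟨j, hj⟩ : Fin n)) ∈ s := (e ⟨j, hj⟩).2
    have hne : ((e ⟨i, hi⟩ : Fin n)) ≠ ((e ⟨j, hj⟩ : Fin n)) := by
      have h1 : e ⟨i, hi⟩ < e ⟨j, hj⟩ := e.strictMono (Fin.mk_lt_mk.mpr hij)
      exact fun h => absurd (Subtype.ext h) (ne_of_lt h1)
    obtain ⟨-, m, h1, h2, h3⟩ := hs.1 hxs hys hne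
    refine ⟨m, h1, h2, ?_⟩
    have hlt : D i < D j := hDmono i j hij hjk
    simp only [hD, dif_pos hi, dif_pos hj] at hlt ⊢
    omega
  have hup : ∀ i, 1 ≤ i → i ≤ k → t i ≤ D i - D 0 := by
    intro i h1
    induction i, h1 using Nat.le_induction with
    | base =>
      intro h
      obtain ⟨m, hm1, hm2, hm3⟩ := hadj 0 1 one_pos h
      have := t_mono_le k t hmono le_rfl hm1 hm2
      omega
    | succ i hi ih =>
      intro h
      obtain ⟨m, hm1, hm2, hm3⟩ := hadj 0 (i + 1) (by omega) h
      have h4 := ih (by omega)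
      have h5 : D i < D (i + 1) := hDmono i (i + 1) (by omega) h
      have h6 : D 0 < D i := hDmono 0 i (by omega) (by omega)
      have h7 : t i < t m := by omega
      have h8 : i < m := t_lt_idx k t hmono hi (by omega) hm1 hm2 h7
      have h9 : t (i + 1) ≤ t m := t_mono_le k t hmono (by omega) (by omega) hm2
      omega
  have hdown : ∀ p i, 1 ≤ i → i ≤ k → k ≤ i + p → D i - D 0 ≤ t i := by
    intro p
    induction p with
    | zero =>
      intro i h1 h2 h3
      obtain ⟨m, hm1, hm2, hm3⟩ := hadj 0 i (by omega) h2
      have := t_mono_le k t hmono hm1 (by omega) h2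
      omega
    | succ p ih =>
      intro i h1 h2 h3
      rcases Nat.eq_or_lt_of_le h2 with h | h
      · obtain ⟨m, hm1, hm2, hm3⟩ := hadj 0 i (by omega) h2
        have := t_mono_le k t hmono hm1 (by omega) h2
        omega
      · have h4 := ih (i + 1) (by omega) (by omega) (by omega)
        obtain ⟨m, hm1, hm2, hm3⟩ := hadj 0 i (by omega) h2
        have h5 : D i < D (i + 1) := hDmono i (i + 1) (by omega) (by omega)
        have h6 : D 0 < D i := hDmono 0 i (by omega) (by omega)
        have h7 : t m < t (i + 1) := by omega
        have h8 : m < i + 1 := t_lt_idx k t hmono hm1 hm2 (by omega) (by omega) h7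
        have h9 : t m ≤ t i := t_mono_le k t hmono hm1 (by omega) h2
        omega
  have hDt : ∀ i, 1 ≤ i → i ≤ k → D i - D 0 = t i := by
    intro i h1 h2
    have := hup i h1 h2
    have := hdown k i h1 h2 (by omega)
    omega
  have hstep : ∀ i, 2 ≤ i → i ≤ k → t i = t (i - 1) + t 1 := by
    intro i h2 hik
    have e1 := hDt i (by omega) hik
    have e0 := hDt 1 le_rfl (by omega)
    have e2 := hDt (i - 1) (by omega) (by omega)
    obtain ⟨m, hm1, hm2, hm3⟩ := hadj 1 i (by omega) hik
    obtain ⟨m', hm1', hm2', hm3'⟩ := hadj (i - 1) i (by omega) hik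
    have o1 : D 0 < D 1 := hDmono 0 1 (by omega) (by omega)
    have o2 : D 1 ≤ D (i - 1) := by
      rcases Nat.eq_or_lt_of_le (show 1 ≤ i - 1 by omega) with h | h
      · exact le_of_eq (congrArg D h)
      · exact le_of_lt (hDmono 1 (i - 1) h (by omega))
    have o3 : D (i - 1) < D i := hDmono (i - 1) i (by omega) hik
    -- t m = D i - D 1 = t i - t 1 < t i  ⟹  m ≤ i - 1  ⟹  t m ≤ t (i-1)
    have h7 : t m < t i := by omega
    have h8 : m < i := t_lt_idx k t hmono hm1 hm2 (by omega) hik h7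
    have h9 : t m ≤ t (i - 1) := t_mono_le k t hmono hm1 (by omega) (by omega)
    -- t m' = D i - D (i-1) ≥ t 1
    have h10 : t 1 ≤ t m' := t_mono_le k t hmono le_rfl hm1' hm2'
    omega
  intro i h1
  induction i, h1 using Nat.le_induction with
  | base => intro _; simp
  | succ i hi ih =>
    intro h
    have h1 := hstep (i + 1) (by omega) h
    have h2 := ih (by omega)
    simp only [Nat.add_sub_cancel] at h1
    rw [h1, h2]
    ring

/-- For `k ≥ 2` and `n > t (k-1) + t k`: claw-free ↔ cocoonery
(`t i = i * t 1` for all `1 ≤ i ≤ k`) ↔ the clique number equals `k + 1`. -/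
theorem stmt_4 (n k : ℕ) (t : ℕ → ℕ) (hk : 2 ≤ k)
    (hpos : 0 < t 1) (hmono : StrictMonoOn t (Set.Icc 1 k)) (htn : t k < n)
    (hn : t (k - 1) + t k < n) :
    (ClawFree (toeplitzGraph n k t) ↔ ∀ i, 1 ≤ i → i ≤ k → t i = i * t 1) ∧
    (ClawFree (toeplitzGraph n k t) ↔ (toeplitzGraph n k t).cliqueNum = k + 1) := by
  have hc1 : ClawFree (toeplitzGraph n k t) ↔ ∀ i, 1 ≤ i → i ≤ k → t i = i * t 1 := by
    constructor
    · intro h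
      by_contra hnc
      exact h (claw_of_not n k t hk hpos hmono hn hnc)
    · intro h
      exact noclaw n k t hpos h
  refine ⟨hc1, hc1.trans ?_⟩
  constructor
  · intro hc
    apply le_antisymm
    · obtain ⟨s, hs⟩ := (toeplitzGraph n k t).exists_isNClique_cliqueNum
      exact clique_bound n k t hs
    · obtain ⟨s, hs⟩ := cocoon_clique n k t hpos htn hc (by omega)
      have h2 := SimpleGraph.IsClique.card_le_cliqueNum (G := toeplitzGraph n k t) (t := s)
        (tc := hs.1)
      rw [hs.2] at h2
      exact h2
  · intro hnum
    obtain ⟨s, hs⟩ := (toeplitzGraph n k t).exists_isNClique_cliqueNum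
    rw [hnum] at hs
    exact cocoon_of_clique n k t (by omega) hpos hmono hs
end

section
/- Let k ≥ 2 and let positive integers n, t satisfy (k+1)t < n ≤ 2kt. Then the mutation of the (n,k,t)-cocoonery, namely the Toeplitz graph T_n⟨t, 2t, …, (k−1)t, (k+1)t⟩, is claw-free. -/
/-- For `k ≥ 2` and `(k+1)t < n ≤ 2kt`, the mutation
`T_n⟨t, 2t, …, (k−1)t, (k+1)t⟩` of the `(n,k,t)`-cocoonery is claw-free. -/
theorem stmt_5 (n k t : ℕ) (hk : 2 ≤ k) (ht : 0 < t)
    (hn1 : (k + 1) * t < n) (hn2 : n ≤ 2 * k * t) :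
    ClawFree (toeplitzGraph n k (fun i => if i = k then (k + 1) * t else i * t)) := by
  set τ : ℕ → ℕ := fun i => if i = k then (k + 1) * t else i * t with hτ
  rintro ⟨a, b, c, d, hab, hac, had, hbc, hbd, hcd, nbc, nbd, ncd⟩
  -- extract signed coefficient from an adjacency with the center
  have extract : ∀ x y : Fin n, (toeplitzGraph n k τ).Adj x y →
      ∃ e : ℤ, (y : ℤ) - (x : ℤ) = e * t ∧ 1 ≤ e.natAbs ∧ e.natAbs ≤ k + 1 ∧ e.natAbs ≠ k := by
    rintro x y ⟨hne, i, h1, h2, h3⟩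
    set m : ℕ := if i = k then k + 1 else i with hm
    have h3' : ((x : ℤ) - (y : ℤ)).natAbs = m * t := by
      simp only [hτ] at h3
      by_cases hik : i = k <;> simp [hm, hik] at h3 ⊢ <;> omega
    have hmk : 1 ≤ m ∧ m ≤ k + 1 ∧ m ≠ k := by
      by_cases hik : i = k <;> simp [hm, hik] <;> omega
    rcases Int.natAbs_eq ((x : ℤ) - (y : ℤ)) with h | h
    · rw [h3'] at h; push_cast at h
      refine ⟨-(m : ℤ), by linarith, ?_, ?_, ?_⟩ <;>
        rw [Int.natAbs_neg, Int.natAbs_natCast] <;> omega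
    · rw [h3'] at h; push_cast at h
      refine ⟨(m : ℤ), by linarith, ?_, ?_, ?_⟩ <;>
        rw [Int.natAbs_natCast] <;> omega
  -- nonadjacency of two leaves gives constraints on the difference of coefficients
  have pairfact : ∀ (x y : Fin n) (ex ey : ℤ), (x : ℤ) - (a : ℤ) = ex * t →
      (y : ℤ) - (a : ℤ) = ey * t → x ≠ y → ¬ (toeplitzGraph n k τ).Adj x y →
      k ≤ (ex - ey).natAbs ∧ (ex - ey).natAbs ≤ 2 * k - 1 ∧ (ex - ey).natAbs ≠ k + 1 := by
    intro x y ex ey hx hy hne hnadj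
    set f : ℤ := ex - ey with hf
    have hxy : (x : ℤ) - (y : ℤ) = f * t := by rw [hf]; push_cast; linarith
    have hf0 : f ≠ 0 := by
      intro h0
      rw [h0, zero_mul] at hxy
      exact hne (Fin.ext (by omega))
    have hnat : ((x : ℤ) - (y : ℤ)).natAbs = f.natAbs * t := by
      rw [hxy, Int.natAbs_mul, Int.natAbs_natCast]
    have hlt : ((x : ℤ) - (y : ℤ)).natAbs < n := by
      have := x.isLt; have := y.isLt; omega
    have hbound : f.natAbs < 2 * k := by
      have : f.natAbs * t < 2 * k * t := by omega
      exact Nat.lt_of_mul_lt_mul_right this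
    have hne1 : f.natAbs ≠ k + 1 := by
      intro hfk
      exact hnadj ⟨hne, k, by omega, le_refl k, by simp [hτ, hnat, hfk]⟩
    have hge : k ≤ f.natAbs := by
      by_contra hlt'
      have h1 : 1 ≤ f.natAbs := by
        rcases Nat.eq_zero_or_pos f.natAbs with h | h
        · exact absurd (Int.natAbs_eq_zero.mp h) hf0
        · omega
      refine hnadj ⟨hne, f.natAbs, h1, by omega, ?_⟩
      have : f.natAbs ≠ k := by omega
      simp [hτ, hnat, this]
    exact ⟨hge, by omega, hne1⟩
  obtain ⟨eb, heb, heb1, heb2, heb3⟩ := extract a b hab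
  obtain ⟨ec, hec, hec1, hec2, hec3⟩ := extract a c hac
  obtain ⟨ed, hed, hed1, hed2, hed3⟩ := extract a d had
  have hb' : (b : ℤ) - (a : ℤ) = eb * t := heb
  have hc' : (c : ℤ) - (a : ℤ) = ec * t := hec
  have hd' : (d : ℤ) - (a : ℤ) = ed * t := hed
  obtain ⟨p1, p2, p3⟩ := pairfact b c eb ec hb' hc' hbc nbc
  obtain ⟨q1, q2, q3⟩ := pairfact b d eb ed hb' hd' hbd nbd
  obtain ⟨r1, r2, r3⟩ := pairfact c d ec ed hc' hd' hcd ncd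
  omega
end

section
/- Let G = T_n⟨t_1, …, t_k⟩ be a Toeplitz graph with k ≥ 4 and t_{k−1} + t_k = n. Then G is claw-free if and only if G is a cocoonery or the mutation of a cocoonery; that is, if and only if either t_i = i·t_1 for all 1 ≤ i ≤ k, or t_i = i·t_1 for all 1 ≤ i ≤ k−1 and t_k = (k+1)·t_1. -/
set_option maxHeartbeats 1000000

lemma hasClaw_mk (n k : ℕ) (t : ℕ → ℕ) (a b c d : ℕ)
    (han : a < n) (hbn : b < n) (hcn : c < n) (hdn : d < n)
    (hab : a ≠ b) (hac : a ≠ c) (had : a ≠ d)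
    (hbc : b ≠ c) (hbd : b ≠ d) (hcd : c ≠ d)
    (eab : ∃ i, 1 ≤ i ∧ i ≤ k ∧ (a = b + t i ∨ b = a + t i))
    (eac : ∃ i, 1 ≤ i ∧ i ≤ k ∧ (a = c + t i ∨ c = a + t i))
    (ead : ∃ i, 1 ≤ i ∧ i ≤ k ∧ (a = d + t i ∨ d = a + t i))
    (nbc : ∀ i, 1 ≤ i → i ≤ k → b ≠ c + t i ∧ c ≠ b + t i)
    (nbd : ∀ i, 1 ≤ i → i ≤ k → b ≠ d + t i ∧ d ≠ b + t i)
    (ncd : ∀ i, 1 ≤ i → i ≤ k → c ≠ d + t i ∧ d ≠ c + t i) :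
    HasClaw (toeplitzGraph n k t) := by
  refine ⟨⟨a, han⟩, ⟨b, hbn⟩, ⟨c, hcn⟩, ⟨d, hdn⟩, ?_, ?_, ?_,
    Fin.ne_of_val_ne hbc, Fin.ne_of_val_ne hbd, Fin.ne_of_val_ne hcd, ?_, ?_, ?_⟩
  · obtain ⟨i, h1, h2, h3⟩ := eab
    exact ⟨Fin.ne_of_val_ne hab, i, h1, h2, by show ((a:ℤ) - (b:ℤ)).natAbs = t i; omega⟩
  · obtain ⟨i, h1, h2, h3⟩ := eac
    exact ⟨Fin.ne_of_val_ne hac, i, h1, h2, by show ((a:ℤ) - (c:ℤ)).natAbs = t i; omega⟩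
  · obtain ⟨i, h1, h2, h3⟩ := ead
    exact ⟨Fin.ne_of_val_ne had, i, h1, h2, by show ((a:ℤ) - (d:ℤ)).natAbs = t i; omega⟩
  · rintro ⟨-, i, h1, h2, h3⟩
    have h3' : ((b:ℤ) - (c:ℤ)).natAbs = t i := h3
    obtain ⟨w1, w2⟩ := nbc i h1 h2; omega
  · rintro ⟨-, i, h1, h2, h3⟩
    have h3' : ((b:ℤ) - (d:ℤ)).natAbs = t i := h3
    obtain ⟨w1, w2⟩ := nbd i h1 h2; omega
  · rintro ⟨-, i, h1, h2, h3⟩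
    have h3' : ((c:ℤ) - (d:ℤ)).natAbs = t i := h3
    obtain ⟨w1, w2⟩ := ncd i h1 h2; omega

lemma easy_dir (n k s : ℕ) (t : ℕ → ℕ) (hs : 0 < s)
    (hlow : ∀ i, 1 ≤ i → i ≤ k - 1 → t i = i * s)
    (hks : ∃ c, t k = c * s)
    (hnle : n ≤ 2 * (k * s)) :
    ClawFree (toeplitzGraph n k t) := by
  rintro ⟨a, b, c, d, hab, hac, had, hbc, hbd, hcd, nbc, nbd, ncd⟩
  -- decompose adjacency to center: signed multiples of s
  have decomp : ∀ x y : Fin n, (toeplitzGraph n k t).Adj x y →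
      ∃ e : ℤ, (x : ℤ) - (y : ℤ) = e * s := by
    rintro x y ⟨-, i, h1, h2, h3⟩
    rcases le_or_gt i (k - 1) with h | h
    · have ht : t i = i * s := hlow i h1 h
      rw [ht] at h3
      rcases Int.natAbs_eq ((x:ℤ) - (y:ℤ)) with he | he
      · exact ⟨i, by rw [he, h3]; push_cast; ring⟩
      · exact ⟨-(i:ℤ), by rw [he, h3]; push_cast; ring⟩
    · have hik : i = k := by omega
      obtain ⟨ck, hck⟩ := hks
      rw [hik, hck] at h3
      rcases Int.natAbs_eq ((x:ℤ) - (y:ℤ)) with he | he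
      · exact ⟨ck, by rw [he, h3]; push_cast; ring⟩
      · exact ⟨-(ck:ℤ), by rw [he, h3]; push_cast; ring⟩
  obtain ⟨e1, he1⟩ := decomp a b hab
  obtain ⟨e2, he2⟩ := decomp a c hac
  obtain ⟨e3, he3⟩ := decomp a d had
  -- leaf pairs are ≥ k*s apart
  have gap : ∀ (x y : Fin n) (ex ey : ℤ), (a:ℤ) - x = ex * s → (a:ℤ) - y = ey * s →
      x ≠ y → ¬ (toeplitzGraph n k t).Adj x y → k * s ≤ ((x:ℤ) - (y:ℤ)).natAbs := by
    intro x y ex ey hx hy hne hnadj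
    have hxy : (x:ℤ) - (y:ℤ) = (ey - ex) * s := by rw [sub_mul, ← hx, ← hy]; ring
    set m : ℕ := (ey - ex).natAbs with hm
    have habs : ((x:ℤ) - (y:ℤ)).natAbs = m * s := by
      rw [hxy, Int.natAbs_mul, Int.natAbs_natCast]
    have hm0 : m ≠ 0 := by
      intro h0
      have : ((x:ℤ) - (y:ℤ)).natAbs = 0 := by rw [habs, h0, Nat.zero_mul]
      have hxyv : (x:ℕ) = (y:ℕ) := by omega
      exact hne (Fin.ext hxyv)
    have hmk : k ≤ m := by
      by_contra hlt
      push_neg at hlt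
      apply hnadj
      refine ⟨hne, m, by omega, by omega, ?_⟩
      rw [habs, hlow m (by omega) (by omega)]
    calc k * s ≤ m * s := Nat.mul_le_mul_right s hmk
    _ = ((x:ℤ) - (y:ℤ)).natAbs := habs.symm
  have g1 := gap b c e1 e2 he1 he2 hbc nbc
  have g2 := gap b d e1 e3 he1 he3 hbd nbd
  have g3 := gap c d e2 e3 he2 he3 hcd ncd
  have hbv : (b:ℕ) < n := b.isLt
  have hcv : (c:ℕ) < n := c.isLt
  have hdv : (d:ℕ) < n := d.isLt
  set M := k * s with hM
  omega

lemma hard_dir (n k : ℕ) (t : ℕ → ℕ) (hk : 4 ≤ k)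
    (hpos : 0 < t 1) (hmono : StrictMonoOn t (Set.Icc 1 k)) (htn : t k < n)
    (hn : t (k - 1) + t k = n) (hcf : ClawFree (toeplitzGraph n k t)) :
    ((∀ i, 1 ≤ i → i ≤ k → t i = i * t 1) ∨
     ((∀ i, 1 ≤ i → i ≤ k - 1 → t i = i * t 1) ∧ t k = (k + 1) * t 1)) := by
  set s := t 1 with hs_def
  have hlt : ∀ i j, 1 ≤ i → i < j → j ≤ k → t i < t j := fun i j h1 h2 h3 =>
    hmono ⟨h1, by omega⟩ ⟨by omega, h3⟩ h2
  have hle : ∀ i j, 1 ≤ i → i ≤ j → j ≤ k → t i ≤ t j := by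
    intro i j h1 h2 h3
    rcases eq_or_lt_of_le h2 with h | h
    · rw [h]
    · exact le_of_lt (hlt i j h1 h h3)
  have htp : ∀ i, 1 ≤ i → i ≤ k → 0 < t i :=
    fun i h1 h2 => lt_of_lt_of_le hpos (hle 1 i le_rfl h1 h2)
  have hcs : ∀ x y : ℕ, x * s = y * s → x = y :=
    fun x y h => Nat.eq_of_mul_eq_mul_right hpos h
  have hms : ∀ x y : ℕ, x ≤ y → x * s ≤ y * s :=
    fun x y h => Nat.mul_le_mul_right s h
  have hone : 1 * s = s := one_mul s
  -- Fact 2: differences within t_1..t_{k-2} lie in T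
  have fact2 : ∀ a b, 1 ≤ a → a < b → b ≤ k - 2 → ∃ e, 1 ≤ e ∧ e ≤ k ∧ t e = t b - t a := by
    intro a b ha hab hb
    by_contra hno
    push_neg at hno
    have h1 : t b < t (k-1) := hlt b (k-1) (by omega) (by omega) (by omega)
    have h2 : t a < t b := hlt a b ha hab (by omega)
    have h3 : 0 < t a := htp a ha (by omega)
    have h4 : 0 < t k := htp k (by omega) le_rfl
    have h5 : t b < t k := hlt b k (by omega) (by omega) le_rfl
    refine absurd (hasClaw_mk n k t (t b) (t b + t k) (t b - t a) 0
      (by omega) (by omega) (by omega) (by omega)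
      (by omega) (by omega) (by omega) (by omega) (by omega) (by omega)
      ⟨k, by omega, le_rfl, Or.inr rfl⟩
      ⟨a, ha, by omega, Or.inl (by omega)⟩
      ⟨b, by omega, by omega, Or.inl (by omega)⟩
      ?_ ?_ ?_) hcf
    · intro i hi1 hi2; have := hle i k hi1 hi2 le_rfl; constructor <;> omega
    · intro i hi1 hi2; have := hle i k hi1 hi2 le_rfl; constructor <;> omega
    · intro i hi1 hi2
      have h6 := htp i hi1 hi2
      have h7 := hno i hi1 hi2
      constructor <;> omega
  -- t_i = i*s for i ≤ k-2
  have hlow : ∀ i, 1 ≤ i → i ≤ k - 2 → t i = i * s := by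
    intro i
    induction i using Nat.strong_induction_on with
    | _ i ih =>
      intro h1 h2
      rcases eq_or_lt_of_le h1 with h | h
      · rw [← h, one_mul]
      · obtain ⟨e, he1, he2, he3⟩ := fact2 (i-1) i (by omega) (by omega) h2
        have hi1 : t (i-1) = (i-1) * s := ih (i-1) (by omega) (by omega) (by omega)
        have hlt1 : t (i-1) < t i := hlt (i-1) i (by omega) (by omega) (by omega)
        have hp1 : 0 < t (i-1) := htp (i-1) (by omega) (by omega)
        have key : t i = t (i-1) + t e := by omega
        have he_lt : e < i := by
          by_contra hcon
          push_neg at hcon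
          have := hle i e h1 hcon he2
          omega
        have hes : t e = e * s := ih e he_lt he1 (by omega)
        rcases eq_or_lt_of_le he1 with h' | h'
        · -- e = 1
          have hexp : (i-1)*s + 1*s = i*s := by
            rw [← Nat.add_mul]; congr 1; omega
          have h1s : t e = 1 * s := by rw [hes, ← h']
          omega
        · -- e ≥ 2: contradiction
          exfalso
          obtain ⟨f, hf1, hf2, hf3⟩ := fact2 (e-1) i (by omega) (by omega) h2
          have hfe : t (e-1) = (e-1)*s := ih (e-1) (by omega) (by omega) (by omega)
          have hlt2 : t (e-1) < t i := hlt (e-1) i (by omega) (by omega) (by omega)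
          have hp2 : 0 < t (e-1) := htp (e-1) (by omega) (by omega)
          have key2 : t i = t (e-1) + t f := by omega
          have hf_lt : f < i := by
            by_contra hcon
            push_neg at hcon
            have := hle i f h1 hcon hf2
            omega
          have hfs : t f = f * s := ih f hf_lt hf1 (by omega)
          have hsum : (i-1+e)*s = (e-1+f)*s := by
            rw [Nat.add_mul, Nat.add_mul]; omega
          have := hcs _ _ hsum
          omega
  -- membership analysis
  have hmemb : ∀ x : ℕ, (∃ e, 1 ≤ e ∧ e ≤ k ∧ t e = x) →
      (∃ e, 1 ≤ e ∧ e ≤ k-2 ∧ e * s = x) ∨ t (k-1) = x ∨ t k = x := by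
    rintro x ⟨e, h1, h2, h3⟩
    rcases le_or_gt e (k-2) with h | h
    · exact Or.inl ⟨e, h1, h, by rw [← hlow e h1 h]; exact h3⟩
    · have he : e = k-1 ∨ e = k := by omega
      rcases he with h' | h'
      · exact Or.inr (Or.inl (by rw [← h']; exact h3))
      · exact Or.inr (Or.inr (by rw [← h']; exact h3))
  have hu2 : (k-2)*s < t (k-1) := by
    have ha := hlt (k-2) (k-1) (by omega) (by omega) (by omega)
    have hb := hlow (k-2) (by omega) le_rfl
    omega
  have huv : t (k-1) < t k := hlt (k-1) k (by omega) (by omega) le_rfl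
  -- TU triples
  have TU : ∀ a b, 1 ≤ a → a ≤ k-2 → 1 ≤ b → b ≤ k-2 →
      (∃ e, 1 ≤ e ∧ e ≤ k ∧ t e = t (k-1) - a * s) ∨
      (∃ e, 1 ≤ e ∧ e ≤ k ∧ t e = (a+b) * s) ∨
      (∃ e, 1 ≤ e ∧ e ≤ k ∧ t e = t (k-1) + b * s) := by
    intro a b ha hak hb hbk
    by_contra hno
    push_neg at hno
    obtain ⟨h1no, h2no, h3no⟩ := hno
    have has : a*s ≤ (k-2)*s := hms a (k-2) hak
    have hbs : b*s ≤ (k-2)*s := hms b (k-2) hbk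
    have habs : (a+b)*s = a*s + b*s := Nat.add_mul a b s
    have h1sa : 1*s ≤ a*s := hms 1 a ha
    have h1sb : 1*s ≤ b*s := hms 1 b hb
    refine absurd (hasClaw_mk n k t (b*s) (b*s + t (k-1)) ((a+b)*s) 0
      (by omega) (by omega) (by omega) (by omega)
      (by omega) (by omega) (by omega) (by omega) (by omega) (by omega)
      ⟨k-1, by omega, by omega, Or.inr rfl⟩
      ⟨a, ha, by omega, Or.inr (by rw [hlow a ha hak]; omega)⟩
      ⟨b, hb, by omega, Or.inl (by rw [hlow b hb hbk]; omega)⟩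
      ?_ ?_ ?_) hcf
    · intro i hi1 hi2
      have hp := htp i hi1 hi2
      constructor
      · intro hEq; exact h1no i hi1 hi2 (by omega)
      · intro hEq; omega
    · intro i hi1 hi2
      have hp := htp i hi1 hi2
      constructor
      · intro hEq; exact h3no i hi1 hi2 (by omega)
      · intro hEq; omega
    · intro i hi1 hi2
      have hp := htp i hi1 hi2
      constructor
      · intro hEq; exact h2no i hi1 hi2 (by omega)
      · intro hEq; omega
  -- Step U : t (k-1) = (k-1)*s
  have H1 := TU 1 (k-2) le_rfl (by omega) (by omega) le_rfl
  have hu : t (k-1) = (k-1) * s := by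
    have h1k2 : 1*s ≤ (k-2)*s := hms 1 (k-2) (by omega)
    have h2k2 : 2*s ≤ (k-2)*s := hms 2 (k-2) (by omega)
    by_cases hdvd : ∃ c, t (k-1) = c * s
    · obtain ⟨c, hc⟩ := hdvd
      have hc2 : k-2 < c := by
        by_contra hcon
        push_neg at hcon
        have := hms c (k-2) hcon
        omega
      rcases eq_or_lt_of_le (show k-1 ≤ c by omega) with h | h
      · rw [hc, ← h]
      · exfalso
        have hck : k ≤ c := by omega
        have hcsle : k*s ≤ c*s := hms k c hck
        have hk1c : (k-1)*s ≤ c*s := hms (k-1) c (by omega)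
        -- from H1: t k = t (k-1) + (k-2)*s
        have hv2 : t k = t (k-1) + (k-2)*s := by
          rcases H1 with ⟨e,he1,he2,he3⟩ | ⟨e,he1,he2,he3⟩ | ⟨e,he1,he2,he3⟩
          · exfalso
            rcases hmemb _ ⟨e,he1,he2,he3⟩ with ⟨e',hf1,hf2,hev⟩ | hev | hev
            · -- e'*s = u - 1*s, u = c*s : e' + 1 = c
              have hadd : (e'+1)*s = e'*s + 1*s := Nat.add_mul e' 1 s
              have : (e'+1)*s = c*s := by omega
              have := hcs _ _ this
              omega
            · omega
            · omega
          · exfalso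
            rcases hmemb _ ⟨e,he1,he2,he3⟩ with ⟨e',hf1,hf2,hev⟩ | hev | hev
            · -- e'*s = (1+(k-2))*s
              have := hcs _ _ hev
              omega
            · -- c*s = (1+(k-2))*s
              rw [hc] at hev
              have := hcs _ _ hev
              omega
            · -- t k = (1+(k-2))*s < u < t k
              have h9 : (1+(k-2))*s ≤ (k-1)*s := hms _ _ (by omega)
              omega
          · rcases hmemb _ ⟨e,he1,he2,he3⟩ with ⟨e',hf1,hf2,hev⟩ | hev | hev
            · exfalso
              have h9 : e'*s ≤ (k-2)*s := hms e' (k-2) hf2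
              omega
            · exfalso; omega
            · omega
        -- claw (+u, +s, -u): center u, leaves u+u, u+s, 0
        have hcc : (c+c)*s = c*s + c*s := Nat.add_mul c c s
        have hc1 : (c+1)*s = c*s + 1*s := Nat.add_mul c 1 s
        have hcm1 : (c-1)*s + 1*s = c*s := by rw [← Nat.add_mul]; congr 1; omega
        have hckk : (c+(k-2))*s = c*s + (k-2)*s := Nat.add_mul c (k-2) s
        refine absurd (hasClaw_mk n k t (t (k-1)) (t (k-1) + t (k-1)) (t (k-1) + s) 0
          (by omega) (by omega) (by omega) (by omega)
          (by omega) (by omega) (by omega) (by omega) (by omega) (by omega)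
          ⟨k-1, by omega, by omega, Or.inr rfl⟩
          ⟨1, le_rfl, by omega, Or.inr (by rw [hs_def])⟩
          ⟨k-1, by omega, by omega, Or.inl (by omega)⟩
          ?_ ?_ ?_) hcf
        · -- pair (u+u, u+s) : t i = u - s = (c-1)*s
          intro i hi1 hi2
          have hp := htp i hi1 hi2
          constructor
          · intro hEq
            have hti : t i = (c-1)*s := by omega
            rcases hmemb _ ⟨i, hi1, hi2, hti⟩ with ⟨e',hf1,hf2,hev⟩ | hev | hev
            · have := hcs _ _ hev; omega
            · rw [hc] at hev; have := hcs _ _ hev; omega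
            · rw [hv2, hc] at hev
              have : (c-1)*s = (c+(k-2))*s := by omega
              have := hcs _ _ this
              omega
          · intro hEq; omega
        · -- pair (u+u, 0) : t i = 2u = (c+c)*s
          intro i hi1 hi2
          have hp := htp i hi1 hi2
          constructor
          · intro hEq
            have hti : t i = (c+c)*s := by omega
            rcases hmemb _ ⟨i, hi1, hi2, hti⟩ with ⟨e',hf1,hf2,hev⟩ | hev | hev
            · have := hcs _ _ hev
              have h9 : e' * s ≤ (k-2)*s := hms e' (k-2) hf2
              omega
            · rw [hc] at hev; have := hcs _ _ hev; omega
            · rw [hv2, hc] at hev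
              have : (c+c)*s = (c+(k-2))*s := by omega
              have := hcs _ _ this
              omega
          · intro hEq; omega
        · -- pair (u+s, 0) : t i = u + s = (c+1)*s
          intro i hi1 hi2
          have hp := htp i hi1 hi2
          constructor
          · intro hEq
            have hti : t i = (c+1)*s := by omega
            rcases hmemb _ ⟨i, hi1, hi2, hti⟩ with ⟨e',hf1,hf2,hev⟩ | hev | hev
            · have := hcs _ _ hev
              have h9 : e' * s ≤ (k-2)*s := hms e' (k-2) hf2
              omega
            · rw [hc] at hev; have := hcs _ _ hev; omega
            · rw [hv2, hc] at hev
              have : (c+1)*s = (c+(k-2))*s := by omega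
              have := hcs _ _ this
              omega
          · intro hEq; omega
    · exfalso
      have H2 := TU 2 (k-3) (by omega) (by omega) (by omega) (by omega)
      have hadd1 : (1+(k-2))*s = 1*s + (k-2)*s := Nat.add_mul 1 (k-2) s
      have hadd2 : (2+(k-3))*s = 2*s + (k-3)*s := Nat.add_mul 2 (k-3) s
      have hk3le : (k-3)*s ≤ (k-2)*s := hms (k-3) (k-2) (by omega)
      have hk1eq : (k-1)*s = (k-2)*s + 1*s := by rw [← Nat.add_mul]; congr 1; omega
      -- analysis of a disjunct "t e = u - a*s" : impossible
      have noD1 : ∀ a', 1 ≤ a' → a'*s ≤ (k-2)*s → ¬ ∃ e, 1 ≤ e ∧ e ≤ k ∧ t e = t (k-1) - a'*s := by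
        rintro a' ha' ha's ⟨e, he1, he2, he3⟩
        rcases hmemb _ ⟨e,he1,he2,he3⟩ with ⟨e',hf1,hf2,hev⟩ | hev | hev
        · have hadd : (e'+a')*s = e'*s + a'*s := Nat.add_mul e' a' s
          have h1a : 1*s ≤ a'*s := hms 1 a' ha'
          exact hdvd ⟨e'+a', by omega⟩
        · have h1a : 1*s ≤ a'*s := hms 1 a' ha'
          omega
        · omega
      -- analysis of "t e = (k-1)*s-valued" : gives t k = that value
      have hD2 : ∀ m, m*s = (k-1)*s → (∃ e, 1 ≤ e ∧ e ≤ k ∧ t e = m*s) → t k = (k-1)*s := by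
        rintro m hm ⟨e, he1, he2, he3⟩
        rw [hm] at he3
        rcases hmemb _ ⟨e,he1,he2,he3⟩ with ⟨e',hf1,hf2,hev⟩ | hev | hev
        · have := hcs _ _ hev
          omega
        · exact absurd ⟨k-1, hev⟩ hdvd
        · exact hev
      have hv1 : t k = (k-1)*s := by
        rcases H1 with hD | hD | ⟨e,he1,he2,he3⟩
        · exact absurd hD (noD1 1 le_rfl h1k2)
        · exact hD2 (1+(k-2)) (by congr 1; omega) hD
        · -- t k = u + (k-2)*s; combine with H2
          have hvB : t k = t (k-1) + (k-2)*s := by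
            rcases hmemb _ ⟨e,he1,he2,he3⟩ with ⟨e',hf1,hf2,hev⟩ | hev | hev
            · exfalso
              have h9 : e'*s ≤ (k-2)*s := hms e' (k-2) hf2
              omega
            · exfalso; omega
            · omega
          rcases H2 with hD | hD | ⟨e2,he21,he22,he23⟩
          · exact absurd hD (noD1 2 (by omega) h2k2)
          · exact hD2 (2+(k-3)) (by congr 1; omega) hD
          · exfalso
            have hvB' : t k = t (k-1) + (k-3)*s := by
              rcases hmemb _ ⟨e2,he21,he22,he23⟩ with ⟨e',hf1,hf2,hev⟩ | hev | hev
              · exfalso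
                have h9 : e'*s ≤ (k-2)*s := hms e' (k-2) hf2
                omega
              · exfalso
                have h1a : 1*s ≤ (k-3)*s := hms 1 (k-3) (by omega)
                omega
              · omega
            have : (k-2)*s = (k-3)*s := by omega
            have := hcs _ _ this
            omega
      -- claw (+v, +u, -s): center s, leaves s + t k, s + t (k-1), 0
      refine absurd (hasClaw_mk n k t s (s + t k) (s + t (k-1)) 0
        (by omega) (by omega) (by omega) (by omega)
        (by omega) (by omega) (by omega) (by omega) (by omega) (by omega)
        ⟨k, by omega, le_rfl, Or.inr rfl⟩
        ⟨k-1, by omega, by omega, Or.inr rfl⟩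
        ⟨1, le_rfl, by omega, Or.inl (by rw [hs_def]; omega)⟩
        ?_ ?_ ?_) hcf
      · -- pair (s+v, s+u) : t i = v - u < s
        intro i hi1 hi2
        have hp := htp i hi1 hi2
        have hsle := hle 1 i le_rfl hi1 hi2
        rw [← hs_def] at hsle
        constructor
        · intro hEq; omega
        · intro hEq; omega
      · -- pair (s+v, 0) : t i = s + v > v
        intro i hi1 hi2
        have hp := htp i hi1 hi2
        have hik := hle i k hi1 hi2 le_rfl
        constructor <;> omega
      · -- pair (s+u, 0) : t i = u + s
        intro i hi1 hi2
        have hp := htp i hi1 hi2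
        constructor
        · intro hEq
          have hti : t i = t (k-1) + 1*s := by omega
          rcases hmemb _ ⟨i, hi1, hi2, hti⟩ with ⟨e',hf1,hf2,hev⟩ | hev | hev
          · -- e'*s = u + s : u = (e'-1)*s
            obtain ⟨e'', rfl⟩ : ∃ e'', e' = e'' + 1 := ⟨e'-1, by omega⟩
            have hadd : (e''+1)*s = e''*s + 1*s := Nat.add_mul e'' 1 s
            exact hdvd ⟨e'', by omega⟩
          · omega
          · -- v = u + s, v = (k-1)*s : u = (k-2)*s
            exact hdvd ⟨k-2, by omega⟩
        · intro hEq; omega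
  -- Step V : t k = k*s or (k+1)*s
  have hks : (k-1)*s + 1*s = k*s := by rw [← Nat.add_mul]; congr 1; omega
  have hks2 : (k-1)*s + 2*s = (k+1)*s := by rw [← Nat.add_mul]; congr 1; omega
  have hup : 0 < t (k-1) := htp (k-1) (by omega) (by omega)
  have h1k1 : 1*s ≤ (k-2)*s := hms 1 (k-2) (by omega)
  have hgk : (k-2)*s + 1*s = (k-1)*s := by rw [← Nat.add_mul]; congr 1; omega
  have hv : t k = k * s ∨ t k = (k+1) * s := by
    by_contra hvv
    push_neg at hvv
    obtain ⟨hvk, hvk1⟩ := hvv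
    have hgap : ∃ e, 1 ≤ e ∧ e ≤ k ∧ t e = t k - t (k-1) := by
      by_contra hno
      push_neg at hno
      refine absurd (hasClaw_mk n k t s (s + t k) (s + t (k-1)) 0
        (by omega) (by omega) (by omega) (by omega)
        (by omega) (by omega) (by omega) (by omega) (by omega) (by omega)
        ⟨k, by omega, le_rfl, Or.inr rfl⟩
        ⟨k-1, by omega, by omega, Or.inr rfl⟩
        ⟨1, le_rfl, by omega, Or.inl (by rw [hs_def]; omega)⟩
        ?_ ?_ ?_) hcf
      · -- pair (s+v, s+u) : t i = v - u , excluded by hno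
        intro i hi1 hi2
        have hp := htp i hi1 hi2
        have h9 := hno i hi1 hi2
        constructor
        · intro hEq; exact h9 (by omega)
        · intro hEq; omega
      · -- pair (s+v, 0) : t i = s + v > v
        intro i hi1 hi2
        have hp := htp i hi1 hi2
        have hik := hle i k hi1 hi2 le_rfl
        constructor <;> omega
      · -- pair (s+u, 0) : t i = u + s = k*s
        intro i hi1 hi2
        have hp := htp i hi1 hi2
        constructor
        · intro hEq
          have hti : t i = k*s := by omega
          rcases hmemb _ ⟨i, hi1, hi2, hti⟩ with ⟨e',hf1,hf2,hev⟩ | hev | hev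
          · have := hcs _ _ hev; omega
          · rw [hu] at hev; have := hcs _ _ hev; omega
          · exact hvk hev
        · intro hEq; omega
    obtain ⟨e, he1, he2, hegap⟩ := hgap
    have hcc : ∃ cc, 3 ≤ cc ∧ cc ≤ k-1 ∧ t k = (k-1)*s + cc*s := by
      rcases le_or_gt e (k-2) with h | h
      · have hes : t e = e*s := hlow e he1 h
        have heq : t k = (k-1)*s + e*s := by omega
        refine ⟨e, ?_, by omega, heq⟩
        by_contra hcon
        push_neg at hcon
        have h12 : e = 1 ∨ e = 2 := by omega
        rcases h12 with rfl | rfl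
        · exact hvk (by omega)
        · exact hvk1 (by omega)
      · have he' : e = k-1 ∨ e = k := by omega
        rcases he' with h' | h'
        · refine ⟨k-1, by omega, le_rfl, ?_⟩
          rw [h'] at hegap
          rw [← hu]
          omega
        · exfalso
          rw [h'] at hegap
          omega
    obtain ⟨cc, hc3, hck, hveq⟩ := hcc
    have hccs : (cc-1)*s + 1*s = cc*s := by rw [← Nat.add_mul]; congr 1; omega
    have hle1 : (cc-1)*s ≤ (k-2)*s := hms _ _ (by omega)
    have h1cc : 1*s ≤ (cc-1)*s := hms 1 _ (by omega)
    have hccle : cc*s ≤ (k-1)*s := hms cc (k-1) hck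
    -- claw: center (k-2)*s, leaves (k-2)*s + t k, (k-2)*s + (cc-1)*s, 0
    refine absurd (hasClaw_mk n k t ((k-2)*s) ((k-2)*s + t k) ((k-2)*s + (cc-1)*s) 0
      (by omega) (by omega) (by omega) (by omega)
      (by omega) (by omega) (by omega) (by omega) (by omega) (by omega)
      ⟨k, by omega, le_rfl, Or.inr rfl⟩
      ⟨cc-1, by omega, by omega, Or.inr (by rw [hlow (cc-1) (by omega) (by omega)])⟩
      ⟨k-2, by omega, by omega, Or.inl (by rw [hlow (k-2) (by omega) le_rfl]; omega)⟩
      ?_ ?_ ?_) hcf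
    · -- pair (L1, L2) : t i = t k - (cc-1)*s = k*s
      intro i hi1 hi2
      have hp := htp i hi1 hi2
      constructor
      · intro hEq
        have hti : t i = k*s := by omega
        rcases hmemb _ ⟨i, hi1, hi2, hti⟩ with ⟨e',hf1,hf2,hev⟩ | hev | hev
        · have := hcs _ _ hev; omega
        · rw [hu] at hev; have := hcs _ _ hev; omega
        · exact hvk hev
      · intro hEq; omega
    · -- pair (L1, 0) : t i = (k-2)*s + t k > t k
      intro i hi1 hi2
      have hp := htp i hi1 hi2
      have hik := hle i k hi1 hi2 le_rfl
      constructor <;> omega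
    · -- pair (L2, 0) : t i = (k-2)*s + (cc-1)*s
      intro i hi1 hi2
      have hp := htp i hi1 hi2
      constructor
      · intro hEq
        have hadd : (k-2+(cc-1))*s = (k-2)*s + (cc-1)*s := Nat.add_mul _ _ s
        have hti : t i = (k-2+(cc-1))*s := by omega
        rcases hmemb _ ⟨i, hi1, hi2, hti⟩ with ⟨e',hf1,hf2,hev⟩ | hev | hev
        · have := hcs _ _ hev; omega
        · rw [hu] at hev; have := hcs _ _ hev; omega
        · rw [hveq] at hev
          have hadd2 : (k-1+cc)*s = (k-1)*s + cc*s := Nat.add_mul _ _ s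
          have : (k-1+cc)*s = (k-2+(cc-1))*s := by omega
          have := hcs _ _ this
          omega
      · intro hEq; omega
  -- conclusion
  rcases hv with hv | hv
  · left
    intro i h1 h2
    rcases le_or_gt i (k-2) with h | h
    · exact hlow i h1 h
    · have h' : i = k-1 ∨ i = k := by omega
      rcases h' with h' | h'
      · rw [h']; exact hu
      · rw [h']; exact hv
  · right
    refine ⟨?_, hv⟩
    intro i h1 h2
    rcases le_or_gt i (k-2) with h | h
    · exact hlow i h1 h
    · have h' : i = k-1 := by omega
      rw [h']; exact hu




/-- For `k ≥ 4` and `t (k-1) + t k = n`: `T_n⟨t 1, …, t k⟩` is claw-free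
iff it is a cocoonery or the mutation of a cocoonery. -/
theorem stmt_6 (n k : ℕ) (t : ℕ → ℕ) (hk : 4 ≤ k)
    (hpos : 0 < t 1) (hmono : StrictMonoOn t (Set.Icc 1 k)) (htn : t k < n)
    (hn : t (k - 1) + t k = n) :
    ClawFree (toeplitzGraph n k t) ↔
      ((∀ i, 1 ≤ i → i ≤ k → t i = i * t 1) ∨
       ((∀ i, 1 ≤ i → i ≤ k - 1 → t i = i * t 1) ∧ t k = (k + 1) * t 1)) := by
  constructor
  · exact fun hcf => hard_dir n k t hk hpos hmono htn hn hcf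
  · intro h
    rcases h with h | ⟨h, hk'⟩
    · apply easy_dir n k (t 1) t hpos (fun i h1 h2 => h i h1 (by omega)) ⟨k, h k (by omega) le_rfl⟩
      have h1 : t (k-1) = (k-1) * t 1 := h (k-1) (by omega) (by omega)
      have h2 : t k = k * t 1 := h k (by omega) le_rfl
      have h3 : (k-1)*t 1 + k*t 1 = ((k-1)+k)*t 1 := (Nat.add_mul _ _ _).symm
      have h4 : ((k-1)+k)*t 1 ≤ (2*k)*t 1 := Nat.mul_le_mul_right _ (by omega)
      have h5 : (2*k)*t 1 = 2*(k*t 1) := Nat.mul_assoc 2 k (t 1)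
      omega
    · apply easy_dir n k (t 1) t hpos h ⟨k+1, hk'⟩
      have h1 : t (k-1) = (k-1) * t 1 := h (k-1) (by omega) (by omega)
      have h3 : (k-1)*t 1 + (k+1)*t 1 = ((k-1)+(k+1))*t 1 := (Nat.add_mul _ _ _).symm
      have h4 : ((k-1)+(k+1))*t 1 = (2*k)*t 1 := by congr 1; omega
      have h5 : (2*k)*t 1 = 2*(k*t 1) := Nat.mul_assoc 2 k (t 1)
      omega
end

section
/- Let G = T_n⟨t_1, …, t_k⟩ be a Toeplitz graph with k ≥ 4, and suppose n = t_k + t_{k−1} is an odd integer. Then G is claw-free if and only if G is a cocoonery, i.e., if and only if t_i = i·t_1 for all 1 ≤ i ≤ k. -/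
lemma buildClaw (n k : ℕ) (t : ℕ → ℕ) (a b c d : ℕ)
    (ha : a < n) (hb : b < n) (hc : c < n) (hd : d < n)
    (iab iac iad : ℕ)
    (hab1 : 1 ≤ iab) (hab2 : iab ≤ k) (hab3 : ((a:ℤ) - b).natAbs = t iab)
    (hac1 : 1 ≤ iac) (hac2 : iac ≤ k) (hac3 : ((a:ℤ) - c).natAbs = t iac)
    (had1 : 1 ≤ iad) (had2 : iad ≤ k) (had3 : ((a:ℤ) - d).natAbs = t iad)
    (hab0 : a ≠ b) (hac0 : a ≠ c) (had0 : a ≠ d)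
    (hbc : b ≠ c) (hbd : b ≠ d) (hcd : c ≠ d)
    (nbc : ∀ i, 1 ≤ i → i ≤ k → ((b:ℤ) - c).natAbs ≠ t i)
    (nbd : ∀ i, 1 ≤ i → i ≤ k → ((b:ℤ) - d).natAbs ≠ t i)
    (ncd : ∀ i, 1 ≤ i → i ≤ k → ((c:ℤ) - d).natAbs ≠ t i) :
    HasClaw (toeplitzGraph n k t) := by
  refine ⟨⟨a,ha⟩, ⟨b,hb⟩, ⟨c,hc⟩, ⟨d,hd⟩,
    ⟨by simpa using hab0, iab, hab1, hab2, by simpa using hab3⟩,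
    ⟨by simpa using hac0, iac, hac1, hac2, by simpa using hac3⟩,
    ⟨by simpa using had0, iad, had1, had2, by simpa using had3⟩,
    by simpa using hbc, by simpa using hbd, by simpa using hcd,
    ?_, ?_, ?_⟩
  · rintro ⟨-, i, h1, h2, h3⟩; exact nbc i h1 h2 (by simpa using h3)
  · rintro ⟨-, i, h1, h2, h3⟩; exact nbd i h1 h2 (by simpa using h3)
  · rintro ⟨-, i, h1, h2, h3⟩; exact ncd i h1 h2 (by simpa using h3)

lemma notMemBig (k : ℕ) (t : ℕ → ℕ) (hmono : StrictMonoOn t (Set.Icc 1 k))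
    (v : ℕ) (h : t k < v) : ∀ i, 1 ≤ i → i ≤ k → v ≠ t i := by
  intro i h1 h2
  have : t i ≤ t k := by
    rcases eq_or_lt_of_le h2 with h' | h'
    · rw [h']
    · exact le_of_lt (hmono (Set.mem_Icc.mpr ⟨h1, h2⟩)
        (Set.mem_Icc.mpr ⟨by omega, le_refl k⟩) h')
  omega

lemma notMemAll (k : ℕ) (t : ℕ → ℕ) (t1 : ℕ) (hk : 4 ≤ k)
    (hsmall : ∀ i, 1 ≤ i → i ≤ k-2 → t i = i * t1)
    (v : ℕ) (h1 : t (k-2) < v) (h2 : v ≠ t (k-1)) (h3 : v ≠ t k) :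
    ∀ i, 1 ≤ i → i ≤ k → v ≠ t i := by
  intro i hi1 hi2
  rcases show i ≤ k-2 ∨ i = k-1 ∨ i = k by omega with h | h | h
  · have e1 : t i = i * t1 := hsmall i hi1 h
    have e2 : t (k-2) = (k-2) * t1 := hsmall _ (by omega) (by omega)
    have : i * t1 ≤ (k-2) * t1 := Nat.mul_le_mul_right _ h
    omega
  · rw [h]; exact h2
  · rw [h]; exact h3

lemma same_side (n k : ℕ) (t : ℕ → ℕ) (t1 : ℕ) (ht1 : 0 < t1)
    (H : ∀ i, 1 ≤ i → i ≤ k → t i = i * t1)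
    (a x y : Fin n) (ix iy : ℕ)
    (hix1 : 1 ≤ ix) (hix2 : ix ≤ k) (hiy1 : 1 ≤ iy) (hiy2 : iy ≤ k)
    (hx : ((a:ℤ) - (x:ℤ)).natAbs = ix * t1) (hy : ((a:ℤ) - (y:ℤ)).natAbs = iy * t1)
    (hxy : x ≠ y)
    (hsign : 0 < (a:ℤ) - (x:ℤ) ↔ 0 < (a:ℤ) - (y:ℤ))
    (hnadj : ¬ (toeplitzGraph n k t).Adj x y) : False := by
  have h1x : 0 < ix * t1 := Nat.mul_pos (by omega) ht1
  have h1y : 0 < iy * t1 := Nat.mul_pos (by omega) ht1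
  have hvalne : (x:ℤ) ≠ (y:ℤ) := by
    intro h
    exact hxy (Fin.ext (by exact_mod_cast h))
  have hne : ix ≠ iy := by
    rintro rfl
    apply hvalne
    omega
  apply hnadj
  show x ≠ y ∧ ∃ i, 1 ≤ i ∧ i ≤ k ∧ ((x : ℤ) - (y : ℤ)).natAbs = t i
  refine ⟨hxy, ?_⟩
  rcases Nat.lt_or_ge ix iy with h | h
  · refine ⟨iy - ix, by omega, by omega, ?_⟩
    rw [H _ (by omega) (by omega), Nat.sub_mul]
    have hle : ix * t1 ≤ iy * t1 := Nat.mul_le_mul_right _ (by omega)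
    omega
  · refine ⟨ix - iy, by omega, by omega, ?_⟩
    rw [H _ (by omega) (by omega), Nat.sub_mul]
    have hle : iy * t1 ≤ ix * t1 := Nat.mul_le_mul_right _ h
    omega


set_option linter.all false
set_option maxHeartbeats 2000000

/-- For `k ≥ 4` with `n = t k + t (k-1)` odd: `T_n⟨t 1, …, t k⟩` is
claw-free iff it is a cocoonery, i.e. `t i = i * t 1` for all `1 ≤ i ≤ k`. -/
theorem stmt_7 (n k : ℕ) (t : ℕ → ℕ) (hk : 4 ≤ k)
    (hpos : 0 < t 1) (hmono : StrictMonoOn t (Set.Icc 1 k)) (htn : t k < n)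
    (hn : n = t k + t (k - 1)) (hodd : Odd n) :
    ClawFree (toeplitzGraph n k t) ↔ ∀ i, 1 ≤ i → i ≤ k → t i = i * t 1 := by
  constructor
  · intro hcf
    -- FORWARD
    have tpos : ∀ i, 1 ≤ i → i ≤ k → 0 < t i := by
      intro i h1 h2
      rcases eq_or_lt_of_le h1 with h | h
      · rw [← h]; exact hpos
      · exact hpos.trans (hmono (Set.mem_Icc.mpr ⟨le_refl 1, by omega⟩)
          (Set.mem_Icc.mpr ⟨by omega, h2⟩) h)
    have treflect : ∀ l j, 1 ≤ l → l ≤ k → 1 ≤ j → j ≤ k → t l < t j → l < j := by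
      intro l j hl1 hl2 hj1 hj2 h
      exact (hmono.lt_iff_lt (Set.mem_Icc.mpr ⟨hl1, hl2⟩) (Set.mem_Icc.mpr ⟨hj1, hj2⟩)).mp h
    set t1 := t 1 with ht1def
    clear_value t1
    -- L1 : small sums
    have L1 : ∀ j, 2 ≤ j → j ≤ k - 2 → ∃ l, 1 ≤ l ∧ l ≤ k ∧ t j = t l + t1 := by
      intro j hj2 hjk
      by_contra hno
      push_neg at hno
      apply hcf
      have hjA : t j < t (k-1) := hmono (Set.mem_Icc.mpr ⟨by omega, by omega⟩)
        (Set.mem_Icc.mpr ⟨by omega, by omega⟩) (by omega)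
      have h1A : t1 < t (k-1) := by
        rw [ht1def]
        exact hmono (Set.mem_Icc.mpr ⟨le_refl 1, by omega⟩)
          (Set.mem_Icc.mpr ⟨by omega, by omega⟩) (by omega)
      have h1j : t1 < t j := by
        rw [ht1def]
        exact hmono (Set.mem_Icc.mpr ⟨le_refl 1, by omega⟩)
          (Set.mem_Icc.mpr ⟨by omega, by omega⟩) (by omega)
      have hj0 : 0 < t j := tpos j (by omega) (by omega)
      have hk0 : 0 < t k := tpos k (by omega) (by omega)
      refine buildClaw n k t (t k) 0 (t k + t1) (t k + t j)
        (by omega) (by omega) (by omega) (by omega)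
        k 1 j
        (by omega) (by omega) (by omega)
        (by omega) (by omega) (by omega)
        (by omega) (by omega) (by omega)
        (by omega) (by omega) (by omega)
        (by omega) (by omega) (by omega)
        ?_ ?_ ?_
      · intro i hi1 hi2
        have := notMemBig k t hmono (t k + t1) (by omega) i hi1 hi2
        omega
      · intro i hi1 hi2
        have := notMemBig k t hmono (t k + t j) (by omega) i hi1 hi2
        omega
      · intro i hi1 hi2
        have := hno i hi1 hi2
        omega
    -- L2 : t i = i * t1 for i ≤ k-2
    have hsmallN : ∀ N, ∀ i, i ≤ N → 1 ≤ i → i ≤ k - 2 → t i = i * t1 := by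
      intro N
      induction N with
      | zero => intro i h h1 h2; omega
      | succ N ihN =>
        intro i hiN h1 h2
        by_cases hcase : i ≤ N
        · exact ihN i hcase h1 h2
        · have h : i = N + 1 := by omega
          rcases eq_or_lt_of_le h1 with h1' | h1'
          · rw [← h1', one_mul]; exact ht1def.symm
          · obtain ⟨l, hl1, hlk, hl⟩ := L1 i h1' h2
            have hlt : t l < t i := by omega
            have hli : l < i := treflect l i hl1 hlk (by omega) (by omega) hlt
            have e1 : t l = l * t1 := ihN l (by omega) hl1 (by omega)
            have e2 : t (i-1) = (i-1) * t1 := ihN (i-1) (by omega) (by omega) (by omega)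
            have hlt2 : t (i-1) < t i := hmono (Set.mem_Icc.mpr ⟨by omega, by omega⟩)
              (Set.mem_Icc.mpr ⟨by omega, by omega⟩) (by omega)
            have e3 : t i = (l+1) * t1 := by rw [add_mul, one_mul]; omega
            have hcan : (i-1) < l + 1 := by
              have h' := hlt2
              rw [e2, e3] at h'
              exact (Nat.mul_lt_mul_right hpos).mp h'
            have hle : l + 1 = i := by omega
            rw [hle] at e3
            exact e3
    have hsmall : ∀ i, 1 ≤ i → i ≤ k - 2 → t i = i * t1 := fun i => hsmallN i i le_rfl
    -- atoms and facts
    have hT2 : t (k-2) = (k-2) * t1 := hsmall _ (by omega) (by omega)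
    have hT3 : t (k-3) = (k-3) * t1 := hsmall _ (by omega) (by omega)
    have hT3T2 : t (k-3) + t1 = t (k-2) := by
      rw [hT2, hT3]
      calc (k-3)*t1 + t1 = ((k-3)+1)*t1 := by rw [add_mul, one_mul]
        _ = (k-2)*t1 := by rw [show (k-3)+1 = k-2 from by omega]
    have h2t1 : 2 * t1 ≤ t (k-2) := by
      rw [hT2]; exact Nat.mul_le_mul_right _ (by omega)
    have ht2 : t 2 = 2 * t1 := hsmall 2 (by omega) (by omega)
    have hT2A : t (k-2) < t (k-1) := hmono (Set.mem_Icc.mpr ⟨by omega, by omega⟩)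
      (Set.mem_Icc.mpr ⟨by omega, by omega⟩) (by omega)
    have hAB : t (k-1) < t k := hmono (Set.mem_Icc.mpr ⟨by omega, by omega⟩)
      (Set.mem_Icc.mpr ⟨by omega, by omega⟩) (by omega)
    -- Step A : t k ≠ 2 * t (k-1)
    have hB2A : t k ≠ 2 * t (k-1) := by
      intro hB2
      rcases eq_or_ne (t (k-1)) (2 * t (k-2)) with hA2 | hA2
      · -- S2 claw
        apply hcf
        refine buildClaw n k t (t (k-2)) 0 (2 * t (k-2) - t1) (t (k-2) + t k)
          (by omega) (by omega) (by omega) (by omega)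
          (k-2) (k-3) k
          (by omega) (by omega) (by omega)
          (by omega) (by omega) (by omega)
          (by omega) (by omega) (by omega)
          (by omega) (by omega) (by omega)
          (by omega) (by omega) (by omega)
          ?_ ?_ ?_
        · intro i hi1 hi2
          have := notMemAll k t t1 hk hsmall (2 * t (k-2) - t1)
            (by omega) (by omega) (by omega) i hi1 hi2
          omega
        · intro i hi1 hi2
          have := notMemBig k t hmono (t (k-2) + t k) (by omega) i hi1 hi2
          omega
        · intro i hi1 hi2
          have := notMemAll k t t1 hk hsmall (t (k-2) + t k - (2 * t (k-2) - t1))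
            (by omega) (by omega) (by omega) i hi1 hi2
          omega
      · -- S1 claw
        apply hcf
        refine buildClaw n k t (t (k-2)) 0 (2 * t (k-2)) (t (k-2) + t k)
          (by omega) (by omega) (by omega) (by omega)
          (k-2) (k-2) k
          (by omega) (by omega) (by omega)
          (by omega) (by omega) (by omega)
          (by omega) (by omega) (by omega)
          (by omega) (by omega) (by omega)
          (by omega) (by omega) (by omega)
          ?_ ?_ ?_
        · intro i hi1 hi2
          have := notMemAll k t t1 hk hsmall (2 * t (k-2))
            (by omega) (by omega) (by omega) i hi1 hi2
          omega
        · intro i hi1 hi2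
          have := notMemBig k t hmono (t (k-2) + t k) (by omega) i hi1 hi2
          omega
        · intro i hi1 hi2
          have := notMemAll k t t1 hk hsmall (t k - t (k-2))
            (by omega) (by omega) (by omega) i hi1 hi2
          omega
    -- Cl1
    have Cl1 : (∃ l, 1 ≤ l ∧ l ≤ k ∧ t (k-1) = t l + t1) ∨ t k = t (k-1) + t1 := by
      by_contra hno
      push_neg at hno
      obtain ⟨hno1, hno2⟩ := hno
      apply hcf
      refine buildClaw n k t (t (k-1)) 0 (2 * t (k-1)) (t (k-1) - t1)
        (by omega) (by omega) (by omega) (by omega)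
        (k-1) (k-1) 1
        (by omega) (by omega) (by omega)
        (by omega) (by omega) (by omega)
        (by omega) (by omega) (by omega)
        (by omega) (by omega) (by omega)
        (by omega) (by omega) (by omega)
        ?_ ?_ ?_
      · intro i hi1 hi2
        have := notMemAll k t t1 hk hsmall (2 * t (k-1))
          (by omega) (by omega) (by omega) i hi1 hi2
        omega
      · intro i hi1 hi2
        have := hno1 i hi1 hi2
        omega
      · intro i hi1 hi2
        have := notMemAll k t t1 hk hsmall (t (k-1) + t1)
          (by omega) (by omega) (by omega) i hi1 hi2
        omega
    -- Cl1'
    have Cl1' : (∃ l, 1 ≤ l ∧ l ≤ k ∧ t (k-1) = t l + 2*t1) ∨ t k = t (k-1) + 2*t1 := by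
      by_contra hno
      push_neg at hno
      obtain ⟨hno1, hno2⟩ := hno
      apply hcf
      refine buildClaw n k t (t (k-1)) 0 (2 * t (k-1)) (t (k-1) - 2*t1)
        (by omega) (by omega) (by omega) (by omega)
        (k-1) (k-1) 2
        (by omega) (by omega) (by omega)
        (by omega) (by omega) (by omega)
        (by omega) (by omega) (by omega)
        (by omega) (by omega) (by omega)
        (by omega) (by omega) (by omega)
        ?_ ?_ ?_
      · intro i hi1 hi2
        have := notMemAll k t t1 hk hsmall (2 * t (k-1))
          (by omega) (by omega) (by omega) i hi1 hi2
        omega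
      · intro i hi1 hi2
        have := hno1 i hi1 hi2
        omega
      · intro i hi1 hi2
        have := notMemAll k t t1 hk hsmall (t (k-1) + 2*t1)
          (by omega) (by omega) (by omega) i hi1 hi2
        omega
    -- Cl2
    have Cl2 : ∃ l, 1 ≤ l ∧ l ≤ k ∧ t k = t (k-1) + t l := by
      by_contra hno
      push_neg at hno
      apply hcf
      refine buildClaw n k t (t k) 0 (t k - t (k-1)) (t k + t1)
        (by omega) (by omega) (by omega) (by omega)
        k (k-1) 1
        (by omega) (by omega) (by omega)
        (by omega) (by omega) (by omega)
        (by omega) (by omega) (by omega)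
        (by omega) (by omega) (by omega)
        (by omega) (by omega) (by omega)
        ?_ ?_ ?_
      · intro i hi1 hi2
        have := hno i hi1 hi2
        omega
      · intro i hi1 hi2
        have := notMemBig k t hmono (t k + t1) (by omega) i hi1 hi2
        omega
      · intro i hi1 hi2
        have := notMemAll k t t1 hk hsmall (t (k-1) + t1)
          (by omega) (by omega) ?_ i hi1 hi2
        · omega
        · have := hno 1 (by omega) (by omega)
          omega
    obtain ⟨l, hl1, hlk, hBl⟩ := Cl2
    have hlk2 : l ≤ k - 2 := by
      have hA0 : 0 < t (k-1) := tpos (k-1) (by omega) (by omega)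
      have hlt : t l < t k := by omega
      have hlk' := treflect l k hl1 hlk (by omega) (le_refl k) hlt
      by_contra h
      have hlk1 : l = k - 1 := by omega
      rw [hlk1] at hBl
      omega
    have hBl' : t k = t (k-1) + l * t1 := by rw [hBl, hsmall l hl1 hlk2]
    -- main branch
    have main : t (k-1) = t (k-2) + t1 ∧ t k = t (k-1) + t1 := by
      rcases Cl1 with ⟨l', hl'1, hl'k, hA'⟩ | hBA
      · -- Case a
        have hl'2 : l' ≤ k - 2 := by
          have hlt : t l' < t (k-1) := by omega
          have := treflect l' (k-1) hl'1 hl'k (by omega) (by omega) hlt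
          omega
        have e : t (k-1) = l' * t1 + t1 := by rw [hA', hsmall l' hl'1 hl'2]
        have hcan : k - 2 < l' + 1 := by
          apply (Nat.mul_lt_mul_right hpos).mp
          rw [add_mul, one_mul]
          omega
        have hA'T2 : t (k-1) = t (k-2) + t1 := by
          have hl'e : l' = k - 2 := by omega
          rw [e, hl'e, hT2]
        refine ⟨hA'T2, ?_⟩
        obtain ⟨w, hw⟩ := hodd
        have hlodd : l * t1 % 2 = 1 := by omega
        rcases show l = 1 ∨ l = 2 ∨ 3 ≤ l by omega with h | h | h
        · rw [hBl', h, one_mul]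
        · exfalso
          have : l * t1 = 2 * t1 := by rw [h]
          omega
        · -- C7 claw
          exfalso
          have h3t1 : 3 * t1 ≤ l * t1 := Nat.mul_le_mul_right _ h
          apply hcf
          refine buildClaw n k t (t k) 0 (t k - 2*t1) (t k + t (k-2))
            (by omega) (by omega) (by omega) (by omega)
            k 2 (k-2)
            (by omega) (by omega) (by omega)
            (by omega) (by omega) (by omega)
            (by omega) (by omega) (by omega)
            (by omega) (by omega) (by omega)
            (by omega) (by omega) (by omega)
            ?_ ?_ ?_
          · intro i hi1 hi2
            have := notMemAll k t t1 hk hsmall (t k - 2*t1)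
              (by omega) (by omega) (by omega) i hi1 hi2
            omega
          · intro i hi1 hi2
            have := notMemBig k t hmono (t k + t (k-2)) (by omega) i hi1 hi2
            omega
          · intro i hi1 hi2
            have := notMemAll k t t1 hk hsmall (t (k-2) + 2*t1)
              (by omega) (by omega) (by omega) i hi1 hi2
            omega
      · -- Case b : t k = t (k-1) + t1
        rcases Cl1' with ⟨l', hl'1, hl'k, hA'⟩ | hBA2
        · have hl'2 : l' ≤ k - 2 := by
            have hlt : t l' < t (k-1) := by omega
            have := treflect l' (k-1) hl'1 hl'k (by omega) (by omega) hlt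
            omega
          have e : t (k-1) = l' * t1 + 2*t1 := by rw [hA', hsmall l' hl'1 hl'2]
          have hcan : k - 2 < l' + 2 := by
            apply (Nat.mul_lt_mul_right hpos).mp
            rw [add_mul]
            omega
          rcases show l' = k - 3 ∨ l' = k - 2 by omega with h | h
          · have hA'T2 : t (k-1) = t (k-2) + t1 := by
              rw [e, h]
              omega
            exact ⟨hA'T2, hBA⟩
          · -- C5 claw
            exfalso
            have hA'2 : t (k-1) = t (k-2) + 2*t1 := by rw [e, h, hT2]
            apply hcf
            refine buildClaw n k t (t (k-2) - t1) 0 (t (k-2) + t1) (2*t (k-2) + 2*t1)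
              (by omega) (by omega) (by omega) (by omega)
              (k-3) 2 k
              (by omega) (by omega) (by omega)
              (by omega) (by omega) (by omega)
              (by omega) (by omega) (by omega)
              (by omega) (by omega) (by omega)
              (by omega) (by omega) (by omega)
              ?_ ?_ ?_
            · intro i hi1 hi2
              have := notMemAll k t t1 hk hsmall (t (k-2) + t1)
                (by omega) (by omega) (by omega) i hi1 hi2
              omega
            · intro i hi1 hi2
              have := notMemBig k t hmono (2*t (k-2) + 2*t1) (by omega) i hi1 hi2
              omega
            · intro i hi1 hi2
              have := notMemAll k t t1 hk hsmall (t (k-2) + t1)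
                (by omega) (by omega) (by omega) i hi1 hi2
              omega
        · exfalso
          omega
    obtain ⟨hA'T2, hBfin⟩ := main
    intro i hi1 hik
    rcases show i ≤ k-2 ∨ i = k-1 ∨ i = k by omega with h | h | h
    · exact hsmall i hi1 h
    · rw [h]
      have : (k-1) * t1 = (k-2)*t1 + t1 := by
        rw [show k-1 = (k-2)+1 from by omega, add_mul, one_mul]
      omega
    · rw [h]
      have e : (k-2+2) * t1 = (k-2)*t1 + 2*t1 := add_mul _ _ _
      rw [show k-2+2 = k from by omega] at e
      omega
  · intro H hclaw
    obtain ⟨a, b, c, d, hab, hac, had, hbc, hbd, hcd, nbc, nbd, ncd⟩ := hclaw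
    obtain ⟨hab0, ib, hib1, hib2, hib3⟩ := hab
    obtain ⟨hac0, ic, hic1, hic2, hic3⟩ := hac
    obtain ⟨had0, iD, hid1, hid2, hid3⟩ := had
    rw [H ib hib1 hib2] at hib3
    rw [H ic hic1 hic2] at hic3
    rw [H iD hid1 hid2] at hid3
    have key := same_side n k t (t 1) hpos H a
    have tri : (0 < (a:ℤ) - (b:ℤ) ↔ 0 < (a:ℤ) - (c:ℤ)) ∨
        (0 < (a:ℤ) - (b:ℤ) ↔ 0 < (a:ℤ) - (d:ℤ)) ∨
        (0 < (a:ℤ) - (c:ℤ) ↔ 0 < (a:ℤ) - (d:ℤ)) := by tauto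
    rcases tri with h | h | h
    · exact key b c ib ic hib1 hib2 hic1 hic2 hib3 hic3 hbc h nbc
    · exact key b d ib iD hib1 hib2 hid1 hid2 hib3 hid3 hbd h nbd
    · exact key c d ic iD hic1 hic2 hid1 hid2 hic3 hid3 hcd h ncd
end

section
/- Suppose the Toeplitz graph T_n⟨t_1, …, t_k⟩ is claw-free. Let 1 ≤ ℓ < k, and suppose there exists an integer j with ℓ ≤ j < k such that t_{j+1} − t_j > t_ℓ. Then t_i = i·t_1 for every i with 1 ≤ i ≤ ℓ. -/
/-- If `T_n⟨t 1, …, t k⟩` is claw-free, `1 ≤ ℓ < k`, and there is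
`ℓ ≤ j < k` with `t (j+1) - t j > t ℓ`, then `t i = i * t 1` for all `1 ≤ i ≤ ℓ`. -/
theorem stmt_8 (n k ℓ : ℕ) (t : ℕ → ℕ)
    (hpos : 0 < t 1) (hmono : StrictMonoOn t (Set.Icc 1 k)) (htn : t k < n)
    (hcf : ClawFree (toeplitzGraph n k t))
    (hℓ : 1 ≤ ℓ) (hℓk : ℓ < k)
    (hj : ∃ j, ℓ ≤ j ∧ j < k ∧ t j + t ℓ < t (j + 1)) :
    ∀ i, 1 ≤ i → i ≤ ℓ → t i = i * t 1 := by
  obtain ⟨j, hℓj, hjk, hgap⟩ := hj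
  have hℓk' : ℓ ≤ k := hℓk.le
  have hj1 : 1 ≤ j := le_trans hℓ hℓj
  have htj1k : t (j+1) ≤ t k := hmono.monotoneOn ⟨by omega, hjk⟩ ⟨by omega, le_refl k⟩ hjk
  have hbet : ∀ m, 1 ≤ m → m ≤ k → ¬ (t j < t m ∧ t m < t (j+1)) := by
    intro m h1 h2 hm
    rcases le_or_gt m j with h | h
    · have := hmono.monotoneOn ⟨h1, by omega⟩ ⟨hj1, by omega⟩ h
      omega
    · have := hmono.monotoneOn ⟨by omega, by omega⟩ ⟨h1, h2⟩ (by omega : j+1 ≤ m)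
      omega
  have key : ∀ i1 i2, 1 ≤ i1 → i1 < i2 → i2 ≤ ℓ →
      ∃ m, 1 ≤ m ∧ m ≤ k ∧ t i1 + t m = t i2 := by
    intro i1 i2 h1 h12 h2
    have hti1 : t i1 ≤ t ℓ := hmono.monotoneOn ⟨h1, by omega⟩ ⟨hℓ, hℓk'⟩ (by omega)
    have hti2 : t i2 ≤ t ℓ := hmono.monotoneOn ⟨by omega, by omega⟩ ⟨hℓ, hℓk'⟩ h2
    have hti12 : t i1 < t i2 := hmono ⟨h1, by omega⟩ ⟨by omega, by omega⟩ h12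
    have h1pos : 0 < t i1 := by
      have := hmono.monotoneOn ⟨le_refl 1, by omega⟩ ⟨h1, by omega⟩ h1
      omega
    set A := t (j+1) with hA
    have hAn : A < n := by omega
    have hAt : t ℓ < A := by omega
    by_contra hcon
    push_neg at hcon
    apply hcf
    refine ⟨⟨A, hAn⟩, ⟨0, by omega⟩, ⟨A - t i2, by omega⟩, ⟨A - t i1, by omega⟩,
      ⟨?_, j+1, by omega, hjk, ?_⟩, ⟨?_, i2, by omega, by omega, ?_⟩,
      ⟨?_, i1, by omega, by omega, ?_⟩, ?_, ?_, ?_, ?_, ?_, ?_⟩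
    · simp only [ne_eq, Fin.mk.injEq]; omega
    · simp only [Fin.val_mk]; omega
    · simp only [ne_eq, Fin.mk.injEq]; omega
    · simp only [Fin.val_mk]; omega
    · simp only [ne_eq, Fin.mk.injEq]; omega
    · simp only [Fin.val_mk]; omega
    · simp only [ne_eq, Fin.mk.injEq]; omega
    · simp only [ne_eq, Fin.mk.injEq]; omega
    · simp only [ne_eq, Fin.mk.injEq]; omega
    · rintro ⟨-, m, hm1, hm2, hm3⟩
      simp only [Fin.val_mk] at hm3
      exact hbet m hm1 hm2 (by omega)
    · rintro ⟨-, m, hm1, hm2, hm3⟩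
      simp only [Fin.val_mk] at hm3
      exact hbet m hm1 hm2 (by omega)
    · rintro ⟨-, m, hm1, hm2, hm3⟩
      simp only [Fin.val_mk] at hm3
      exact hcon m hm1 hm2 (by omega)
  intro i
  induction i with
  | zero => omega
  | succ p ih =>
    intro h1 h2
    rcases Nat.lt_or_ge p 1 with h | h
    · interval_cases p
      simp
    · have hp : t p = p * t 1 := ih h (by omega)
      obtain ⟨m, hm1, hm2, hm3⟩ := key p (p+1) h (by omega) h2
      have hm4 : t 1 ≤ t m := hmono.monotoneOn ⟨le_refl 1, by omega⟩ ⟨hm1, hm2⟩ hm1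
      obtain ⟨q, hq1, hq2, hq3⟩ := key 1 (p+1) (le_refl 1) (by omega) h2
      have hqp : p ≤ q := by
        by_contra h'
        have := hmono ⟨hq1, hq2⟩ ⟨h, by omega⟩ (by omega : q < p)
        omega
      have hpq : q ≤ p := by
        by_contra h'
        have := hmono.monotoneOn ⟨by omega, by omega⟩ ⟨hq1, hq2⟩ (by omega : p+1 ≤ q)
        omega
      have hqp2 : q = p := le_antisymm hpq hqp
      subst hqp2
      rw [Nat.succ_mul]
      omega
end

section
/- Let {t_n}_{n=1}^∞ be a strictly increasing sequence of positive integers such that for every positive integer n the Toeplitz graph T_{t_n+1}⟨t_1, …, t_n⟩ is claw-free. Then there exists a positive integer ℓ such that t_n ≤ n·t_ℓ for every positive integer n; that is, the sequence {t_n} is bounded above by an arithmetic sequence with common difference t_ℓ. -/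
lemma toeplitzGraph_adj {n k : ℕ} {t : ℕ → ℕ} (x y : Fin n) :
    (toeplitzGraph n k t).Adj x y ↔
      x ≠ y ∧ ∃ i, 1 ≤ i ∧ i ≤ k ∧ ((x : ℤ) - (y : ℤ)).natAbs = t i := Iff.rfl

lemma key_claw (t : ℕ → ℕ) (hpos : 0 < t 1) (hmono : StrictMonoOn t (Set.Ici 1))
    {n i j : ℕ} (hi : 1 ≤ i) (hij : i < j) (hjn : j < n)
    (hcf : ClawFree (toeplitzGraph (t n + 1) n t)) :
    (∃ m, 1 ≤ m ∧ m ≤ n ∧ t j - t i = t m) ∨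
    (∃ m, 1 ≤ m ∧ m ≤ n ∧ t n - t i = t m) ∨
    (∃ m, 1 ≤ m ∧ m ≤ n ∧ t n - t j = t m) := by
  by_contra hcon
  push_neg at hcon
  obtain ⟨h1, h2, h3⟩ := hcon
  have hj1 : (1:ℕ) ≤ j := le_trans hi hij.le
  have hn1 : (1:ℕ) ≤ n := le_trans hj1 hjn.le
  have hij' : t i < t j := hmono hi hj1 hij
  have hjn' : t j < t n := hmono hj1 hn1 hjn
  have hin' : t i < t n := lt_trans hij' hjn'
  have h0i : 0 < t i := lt_of_lt_of_le hpos (hmono.monotoneOn (Set.mem_Ici.mpr le_rfl) hi hi)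
  apply hcf
  refine ⟨⟨0, by omega⟩, ⟨t i, by omega⟩, ⟨t j, by omega⟩, ⟨t n, by omega⟩,
    ⟨by simp [Fin.ext_iff]; omega, i, hi, le_of_lt (lt_trans hij hjn), by simp⟩,
    ⟨by simp [Fin.ext_iff]; omega, j, hj1, hjn.le, by simp⟩,
    ⟨by simp [Fin.ext_iff]; omega, n, hn1, le_rfl, by simp⟩,
    by simp [Fin.ext_iff]; omega, by simp [Fin.ext_iff]; omega, by simp [Fin.ext_iff]; omega,
    ?_, ?_, ?_⟩
  · rintro ⟨-, m, hm1, hmn, habs⟩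
    simp only [Fin.val_mk] at habs
    exact h1 m hm1 hmn (by omega)
  · rintro ⟨-, m, hm1, hmn, habs⟩
    simp only [Fin.val_mk] at habs
    exact h2 m hm1 hmn (by omega)
  · rintro ⟨-, m, hm1, hmn, habs⟩
    simp only [Fin.val_mk] at habs
    exact h3 m hm1 hmn (by omega)


/-- If `{t n}` is a strictly increasing sequence of positive integers such
that `T_{t n + 1}⟨t 1, …, t n⟩` is claw-free for every `n ≥ 1`, then `{t n}` is bounded
above by an arithmetic sequence with common difference `t ℓ` for some `ℓ ≥ 1`. -/
theorem stmt_9 (t : ℕ → ℕ) (hpos : 0 < t 1)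
    (hmono : StrictMonoOn t (Set.Ici 1))
    (hcf : ∀ n : ℕ, 1 ≤ n → ClawFree (toeplitzGraph (t n + 1) n t)) :
    ∃ ℓ : ℕ, 1 ≤ ℓ ∧ ∀ n : ℕ, 1 ≤ n → t n ≤ n * t ℓ := by
  by_cases hall : ∀ i j : ℕ, 1 ≤ i → i < j → ∃ m, 1 ≤ m ∧ t j - t i = t m
  · -- all differences are in the sequence ⇒ t n = n * t 1
    refine ⟨1, le_rfl, ?_⟩
    have hval : ∀ n : ℕ, 1 ≤ n → t n = n * t 1 := by
      intro n
      induction n using Nat.strong_induction_on with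
      | _ n ih =>
        intro hn
        rcases eq_or_lt_of_le hn with h1 | h2
        · rw [← h1]; ring
        · obtain ⟨m, hm1, hm⟩ := hall 1 n le_rfl h2
          have ht1n : t 1 < t n := hmono (Set.mem_Ici.mpr le_rfl) (Set.mem_Ici.mpr hn) h2
          have hmn : m < n := by
            by_contra h
            push_neg at h
            have : t n ≤ t m := hmono.monotoneOn (Set.mem_Ici.mpr hn) (Set.mem_Ici.mpr hm1) h
            omega
          have hmval := ih m hmn hm1
          have hn1val := ih (n - 1) (by omega) (by omega)
          have hlt : t (n - 1) < t n :=
            hmono (Set.mem_Ici.mpr (by omega)) (Set.mem_Ici.mpr hn) (by omega)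
          have hnm : (n - 1) * t 1 < (m + 1) * t 1 := by
            have : t n = (m + 1) * t 1 := by rw [add_mul, one_mul]; omega
            omega
          have : n - 1 < m + 1 := lt_of_mul_lt_mul_right hnm (Nat.zero_le _)
          have hmeq : m + 1 = n := by omega
          have : t n = (m + 1) * t 1 := by rw [add_mul, one_mul]; omega
          rw [this, hmeq]
    intro n hn
    exact le_of_eq (hval n hn)
  · push_neg at hall
    obtain ⟨i, j, hi, hij, hne⟩ := hall
    have hj1 : (1:ℕ) ≤ j := le_trans hi hij.le
    refine ⟨j, hj1, ?_⟩
    have hjpos : 0 < t j :=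
      lt_of_lt_of_le hpos (hmono.monotoneOn (Set.mem_Ici.mpr le_rfl) (Set.mem_Ici.mpr hj1) hj1)
    have hstep : ∀ n : ℕ, j < n → t n ≤ t (n - 1) + t j := by
      intro n hjn
      have hn1 : (1:ℕ) ≤ n := le_trans hj1 hjn.le
      rcases key_claw t hpos hmono hi hij hjn (hcf n hn1) with ⟨m, hm1, hmn, h⟩ | ⟨m, hm1, hmn, h⟩ | ⟨m, hm1, hmn, h⟩
      · exact absurd h (hne m hm1)
      · -- t n - t i = t m, so t n = t m + t i ≤ t (n-1) + t j
        have hin' : t i < t n :=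
          hmono (Set.mem_Ici.mpr hi) (Set.mem_Ici.mpr hn1) (lt_trans hij hjn)
        have hmn' : m < n := by
          by_contra hc
          push_neg at hc
          have : t n ≤ t m := hmono.monotoneOn (Set.mem_Ici.mpr hn1) (Set.mem_Ici.mpr hm1) hc
          have h0i : 0 < t i := lt_of_lt_of_le hpos
            (hmono.monotoneOn (Set.mem_Ici.mpr le_rfl) (Set.mem_Ici.mpr hi) hi)
          omega
        have htm : t m ≤ t (n - 1) :=
          hmono.monotoneOn (Set.mem_Ici.mpr hm1) (Set.mem_Ici.mpr (by omega)) (by omega)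
        have hij' : t i < t j := hmono (Set.mem_Ici.mpr hi) (Set.mem_Ici.mpr hj1) hij
        omega
      · have hjn' : t j < t n :=
          hmono (Set.mem_Ici.mpr hj1) (Set.mem_Ici.mpr hn1) hjn
        have hmn' : m < n := by
          by_contra hc
          push_neg at hc
          have : t n ≤ t m := hmono.monotoneOn (Set.mem_Ici.mpr hn1) (Set.mem_Ici.mpr hm1) hc
          omega
        have htm : t m ≤ t (n - 1) :=
          hmono.monotoneOn (Set.mem_Ici.mpr hm1) (Set.mem_Ici.mpr (by omega)) (by omega)
        omega
    intro n
    induction n using Nat.strong_induction_on with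
    | _ n ih =>
      intro hn
      rcases le_or_gt n j with hle | hgt
      · have : t n ≤ t j := hmono.monotoneOn (Set.mem_Ici.mpr hn) (Set.mem_Ici.mpr hj1) hle
        calc t n ≤ t j := this
          _ = 1 * t j := (one_mul _).symm
          _ ≤ n * t j := Nat.mul_le_mul_right _ hn
      · have h1 := hstep n hgt
        have h2 := ih (n - 1) (by omega) (by omega)
        have h4 : (n - 1 + 1) * t j = (n - 1) * t j + t j := Nat.succ_mul _ _
        have h5 : n - 1 + 1 = n := by omega
        rw [h5] at h4
        omega
end

section
/- Let G = T_n⟨t_1, t_2⟩ be a Toeplitz graph with n = t_1 + t_2, and let d = gcd(t_1, t_2). Then G is isomorphic to the disjoint union of d copies of the cycle C_{n/d} of length n/d. -/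
/-- The disjoint union of `d` copies of the cycle graph `C_m`. -/
def copiesOfCycle (d m : ℕ) : SimpleGraph (Fin d × Fin m) where
  Adj x y := x.1 = y.1 ∧ (SimpleGraph.cycleGraph m).Adj x.2 y.2
  symm := by constructor; rintro x y ⟨h1, h2⟩; exact ⟨h1.symm, h2.symm⟩
  loopless := by constructor; rintro x ⟨-, h⟩; exact (SimpleGraph.cycleGraph m).ne_of_adj h rfl

lemma dvd_small {M : ℕ} (z : ℤ) (hM : 0 < M) (h1 : -(2*M) < z) (h2 : z < M) :
    (M:ℤ) ∣ z ↔ z = 0 ∨ z = -M := by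
  constructor
  · rintro ⟨c, rfl⟩
    have hM' : (0:ℤ) < M := by exact_mod_cast hM
    have : c = 0 ∨ c = -1 := by
      rcases lt_trichotomy c 0 with hc | hc | hc
      · right
        by_contra h
        have hc2 : c ≤ -2 := by omega
        nlinarith
      · left; exact hc
      · exfalso
        have : (1:ℤ) ≤ c := hc
        nlinarith
    rcases this with rfl | rfl <;> simp
  · rintro (rfl | rfl)
    · exact dvd_zero _
    · exact ⟨-1, by ring⟩

lemma dvd_iff_of_dvd_sub {n u v : ℤ} (h : n ∣ u - v) : n ∣ u ↔ n ∣ v := by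
  constructor <;> intro h2
  · have := h2.sub h; simpa using this
  · have := h2.add h; simpa using this

lemma fin_sub_one {m : ℕ} (hm : 2 ≤ m) (u v : Fin m) :
    (u - v).val = 1 ↔ (m:ℤ) ∣ (((u:ℕ):ℤ) - ((v:ℕ):ℤ) - 1) := by
  have hu := u.isLt; have hv := v.isLt
  rw [dvd_small _ (by omega) (by omega) (by omega)]
  rw [Fin.sub_def]
  simp only []
  rcases le_or_gt (v:ℕ) (u:ℕ) with h | h
  · rw [show m - (v:ℕ) + (u:ℕ) = ((u:ℕ) - (v:ℕ)) + m by omega, Nat.add_mod_right,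
      Nat.mod_eq_of_lt (by omega)]
    omega
  · rw [Nat.mod_eq_of_lt (by omega)]
    omega

lemma key_lemma {d m a : ℕ} (hd : 0 < d) (hcop : Nat.Coprime a m)
    {n t1 : ℕ} (hn : n = d * m) (ht1 : t1 = d * a)
    (r s : ℕ) (hr : r < d) (hs : s < d) (w : ℤ) :
    (n:ℤ) ∣ ((r:ℤ) - s + w * t1) ↔ r = s ∧ (m:ℤ) ∣ w := by
  constructor
  · intro h
    have hdvd : (d:ℤ) ∣ ((r:ℤ) - s + w * t1) := dvd_trans ⟨m, by push_cast [hn]; ring⟩ h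
    have hdt : (d:ℤ) ∣ w * t1 := ⟨w * a, by push_cast [ht1]; ring⟩
    have hrs : (d:ℤ) ∣ ((r:ℤ) - s) := by
      have := hdvd.sub hdt; simpa using this
    have hrs0 : (r:ℤ) - s = 0 := by
      rcases (dvd_small ((r:ℤ) - s) hd (by omega) (by omega)).mp hrs with h0 | h0
      · exact h0
      · omega
    have hr0 : r = s := by omega
    subst hr0
    refine ⟨rfl, ?_⟩
    rw [hrs0, zero_add] at h
    obtain ⟨c, hc⟩ := h
    have hma : (m:ℤ) ∣ w * a := by
      refine ⟨c, ?_⟩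
      have hd' : (d:ℤ) ≠ 0 := by positivity
      have : (d:ℤ) * (w * a) = (d:ℤ) * ((m:ℤ) * c) := by
        push_cast [hn, ht1] at hc ⊢; linarith [hc]
      exact mul_left_cancel₀ hd' this
    have hco : IsCoprime (m:ℤ) (a:ℤ) := by
      rw [Int.isCoprime_iff_gcd_eq_one, Int.gcd_natCast_natCast]
      exact (hcop.symm)
    exact hco.dvd_of_dvd_mul_right hma
  · rintro ⟨rfl, c, rfl⟩
    exact ⟨c * a, by push_cast [hn, ht1]; ring⟩

lemma toeplitz_adj_iff {n : ℕ} (t : ℕ → ℕ)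
    (hpos : 0 < t 1) (h12 : t 1 < t 2) (h2n : t 2 < n) (hn : n = t 1 + t 2)
    (x y : Fin n) :
    (toeplitzGraph n 2 t).Adj x y ↔
      ((n:ℤ) ∣ (((x:ℕ):ℤ) - ((y:ℕ):ℤ) - t 1) ∨ (n:ℤ) ∣ (((x:ℕ):ℤ) - ((y:ℕ):ℤ) + t 1)) := by
  have hx := x.isLt; have hy := y.isLt
  constructor
  · rintro ⟨hne, i, h1, h2, h3⟩
    have hi : i = 1 ∨ i = 2 := by omega
    rcases hi with rfl | rfl
    · rcases (by omega : ((x:ℕ):ℤ) - ((y:ℕ):ℤ) = t 1 ∨ ((x:ℕ):ℤ) - ((y:ℕ):ℤ) = -(t 1)) with h | h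
      · exact Or.inl (by rw [show ((x:ℕ):ℤ) - ((y:ℕ):ℤ) - t 1 = 0 by omega]; exact dvd_zero _)
      · exact Or.inr (by rw [show ((x:ℕ):ℤ) - ((y:ℕ):ℤ) + t 1 = 0 by omega]; exact dvd_zero _)
    · rcases (by omega : ((x:ℕ):ℤ) - ((y:ℕ):ℤ) = t 2 ∨ ((x:ℕ):ℤ) - ((y:ℕ):ℤ) = -(t 2)) with h | h
      · exact Or.inr ⟨1, by omega⟩
      · exact Or.inl ⟨-1, by omega⟩
  · intro h
    have hn0 : 0 < n := by omega
    rcases h with h | h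
    · rcases (dvd_small _ hn0 (by omega) (by omega)).mp h with h0 | h0
      · exact ⟨by intro he; rw [he] at h0; omega, 1, le_refl 1, by omega, by omega⟩
      · exact ⟨by intro he; rw [he] at h0; omega, 2, by omega, by omega, by omega⟩
    · rw [show ((x:ℕ):ℤ) - ((y:ℕ):ℤ) + t 1 = -(((y:ℕ):ℤ) - ((x:ℕ):ℤ) - t 1) by ring,
        dvd_neg] at h
      rcases (dvd_small _ hn0 (by omega) (by omega)).mp h with h0 | h0
      · exact ⟨by intro he; rw [he] at h0; omega, 1, le_refl 1, by omega, by omega⟩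
      · exact ⟨by intro he; rw [he] at h0; omega, 2, by omega, by omega, by omega⟩

/-- If `n = t 1 + t 2` and `d = gcd (t 1) (t 2)`, then `T_n⟨t 1, t 2⟩`
is isomorphic to the disjoint union of `d` copies of the cycle `C_{n/d}`. -/
theorem stmt_10 (n : ℕ) (t : ℕ → ℕ)
    (hpos : 0 < t 1) (h12 : t 1 < t 2) (h2n : t 2 < n)
    (hn : n = t 1 + t 2) :
    Nonempty (toeplitzGraph n 2 t ≃g
      copiesOfCycle (Nat.gcd (t 1) (t 2)) (n / Nat.gcd (t 1) (t 2))) := by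
  set d := Nat.gcd (t 1) (t 2) with hd_def
  set m := n / d with hm_def
  have hd : 0 < d := Nat.gcd_pos_of_pos_left _ hpos
  have hd1 : d ∣ t 1 := Nat.gcd_dvd_left _ _
  have hd2 : d ∣ t 2 := Nat.gcd_dvd_right _ _
  have hdn : d ∣ n := hn ▸ Nat.dvd_add hd1 hd2
  have hnm : n = d * m := by rw [hm_def, Nat.mul_div_cancel' hdn]
  set a := t 1 / d with ha_def
  set b := t 2 / d with hb_def
  have ht1 : t 1 = d * a := (Nat.mul_div_cancel' hd1).symm
  have ht2 : t 2 = d * b := (Nat.mul_div_cancel' hd2).symm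
  have hm : m = a + b := by
    have : d * m = d * (a + b) := by rw [← hnm, hn, ht1, ht2]; ring
    exact Nat.eq_of_mul_eq_mul_left hd this
  have hcop_ab : Nat.Coprime a b := Nat.coprime_div_gcd_div_gcd hd
  have ha : 0 < a := by
    rcases Nat.eq_zero_or_pos a with h | h
    · rw [h, mul_zero] at ht1; omega
    · exact h
  have hab : a < b := by
    by_contra h
    push_neg at h
    have : t 2 ≤ t 1 := by rw [ht1, ht2]; exact Nat.mul_le_mul_left d h
    omega
  have hm3 : 3 ≤ m := by omega
  have hcop : Nat.Coprime a m := by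
    rw [hm]
    simpa [Nat.add_comm] using (Nat.coprime_add_self_right (m := a) (n := b)).mpr hcop_ab
  have hn0 : 0 < n := by omega
  -- the map
  set e : Fin d × Fin m → Fin n := fun p => ⟨((p.1 : ℕ) + (p.2 : ℕ) * t 1) % n, Nat.mod_lt _ hn0⟩
    with he_def
  have he : ∀ p : Fin d × Fin m,
      (n:ℤ) ∣ (((p.1 : ℕ):ℤ) + ((p.2 : ℕ):ℤ) * t 1 - ((e p : ℕ):ℤ)) := by
    intro p
    have : ((e p : ℕ):ℤ) = (((p.1 : ℕ):ℤ) + ((p.2 : ℕ):ℤ) * t 1) % n := by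
      simp only [he_def]
      push_cast [Int.natCast_mod]
      ring_nf
    rw [this]
    exact Int.dvd_self_sub_of_emod_eq rfl
  -- adjacency correspondence
  have hadj : ∀ p q : Fin d × Fin m,
      (toeplitzGraph n 2 t).Adj (e p) (e q) ↔ (copiesOfCycle d m).Adj p q := by
    rintro ⟨r, k⟩ ⟨s, l⟩
    rw [toeplitz_adj_iff t hpos h12 h2n hn]
    have hk := he (r, k)
    have hl := he (s, l)
    have h1 : (n:ℤ) ∣ (((e (r,k) : ℕ):ℤ) - ((e (s,l) : ℕ):ℤ) - t 1) ↔
        (n:ℤ) ∣ (((r:ℕ):ℤ) - ((s:ℕ):ℤ) + (((k:ℕ):ℤ) - ((l:ℕ):ℤ) - 1) * t 1) := by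
      apply dvd_iff_of_dvd_sub
      have hsub := hl.sub hk
      convert hsub using 1
      · rfl
      · dsimp only
        push_cast
        ring
    have h2 : (n:ℤ) ∣ (((e (r,k) : ℕ):ℤ) - ((e (s,l) : ℕ):ℤ) + t 1) ↔
        (n:ℤ) ∣ (((r:ℕ):ℤ) - ((s:ℕ):ℤ) + (((k:ℕ):ℤ) - ((l:ℕ):ℤ) + 1) * t 1) := by
      apply dvd_iff_of_dvd_sub
      have hsub := hl.sub hk
      convert hsub using 1
      · rfl
      · dsimp only
        push_cast
        ring
    rw [h1, h2,
      key_lemma hd hcop hnm ht1 (r:ℕ) (s:ℕ) r.isLt s.isLt _,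
      key_lemma hd hcop hnm ht1 (r:ℕ) (s:ℕ) r.isLt s.isLt _,
      show (copiesOfCycle d m).Adj (r,k) (s,l) ↔
        (r = s ∧ (SimpleGraph.cycleGraph m).Adj k l) from Iff.rfl,
      SimpleGraph.cycleGraph_adj', fin_sub_one (by omega) k l, fin_sub_one (by omega) l k]
    have hneg : (m:ℤ) ∣ (((l:ℕ):ℤ) - ((k:ℕ):ℤ) - 1) ↔
        (m:ℤ) ∣ (((k:ℕ):ℤ) - ((l:ℕ):ℤ) + 1) := by
      rw [show ((l:ℕ):ℤ) - ((k:ℕ):ℤ) - 1 = -(((k:ℕ):ℤ) - ((l:ℕ):ℤ) + 1) by ring, dvd_neg]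
    rw [hneg, ← Fin.val_inj]
    tauto
  -- injectivity
  have hinj : Function.Injective e := by
    rintro ⟨r, k⟩ ⟨s, l⟩ hpq
    have hk := he (r, k)
    have hl := he (s, l)
    rw [hpq] at hk
    have h0 : (n:ℤ) ∣ (((r:ℕ):ℤ) - ((s:ℕ):ℤ) + (((k:ℕ):ℤ) - ((l:ℕ):ℤ)) * t 1) := by
      have hsub := hk.sub hl
      convert hsub using 1
      · rfl
      · dsimp only
        push_cast
        ring
    obtain ⟨hrs, hw⟩ := (key_lemma hd hcop hnm ht1 (r:ℕ) (s:ℕ) r.isLt s.isLt _).mp h0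
    have hkl := k.isLt
    have hll := l.isLt
    have hkl2 : (k:ℕ) = (l:ℕ) := by
      rcases (dvd_small (((k:ℕ):ℤ) - ((l:ℕ):ℤ)) (by omega) (by omega) (by omega)).mp hw
        with h | h <;> omega
    exact Prod.ext (Fin.val_inj.mp hrs) (Fin.val_inj.mp hkl2)
  have hbij : Function.Bijective e :=
    (Fintype.bijective_iff_injective_and_card e).mpr ⟨hinj, by simp [hnm]⟩
  let iso : copiesOfCycle d m ≃g toeplitzGraph n 2 t :=
    ⟨Equiv.ofBijective e hbij, fun {p q} => hadj p q⟩
  exact ⟨iso.symm⟩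
end

section
/- Let G = T_n⟨t_1, t_2, t_3⟩ be a Toeplitz graph (so n > t_3) of order n = 2t_3 − i for some i ∈ {1, 2, 3}. Then G is claw-free if and only if (t_1, t_2, t_3; n) is one of the following: (t, 2t, 3t; 6t−1), (t, 2t, 3t; 6t−2), or (t, 2t, 3t; 6t−3) for some positive integer t; (1, t_3−1, t_3; 2t_3−1), (1, t_3−1, t_3; 2t_3−2), (1, t_3−1, t_3; 2t_3−3), (2, t_3−2, t_3; 2t_3−2), (2, t_3−2, t_3; 2t_3−3), or (3, t_3−3, t_3; 2t_3−3); (2, 4, 5; 7), (1, 2, 4; 6), (1, 2, 4; 5); (2, 3, 4; 6), (2, 3, 4; 5), or (3, 5, 6; 9). -/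
lemma adj_elim' {n : ℕ} {t : ℕ → ℕ} {u v : Fin n} (h : (toeplitzGraph n 3 t).Adj u v) :
    u.val ≠ v.val ∧ (((u:ℤ)-(v:ℤ)).natAbs = t 1 ∨ ((u:ℤ)-(v:ℤ)).natAbs = t 2 ∨
      ((u:ℤ)-(v:ℤ)).natAbs = t 3) := by
  obtain ⟨hne, i, h1, h2, h3⟩ := h
  refine ⟨fun hv => hne (Fin.ext hv), ?_⟩
  have : i = 1 ∨ i = 2 ∨ i = 3 := by omega
  rcases this with rfl | rfl | rfl
  · exact Or.inl h3
  · exact Or.inr (Or.inl h3)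
  · exact Or.inr (Or.inr h3)

lemma nadj_elim' {n : ℕ} {t : ℕ → ℕ} {u v : Fin n} (hne : u ≠ v)
    (h : ¬ (toeplitzGraph n 3 t).Adj u v) :
    ((u:ℤ)-(v:ℤ)).natAbs ≠ t 1 ∧ ((u:ℤ)-(v:ℤ)).natAbs ≠ t 2 ∧
      ((u:ℤ)-(v:ℤ)).natAbs ≠ t 3 :=
  ⟨fun he => h ⟨hne, 1, by omega, by omega, he⟩,
   fun he => h ⟨hne, 2, by omega, by omega, he⟩,
   fun he => h ⟨hne, 3, by omega, by omega, he⟩⟩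

lemma adj_intro' {n : ℕ} {t : ℕ → ℕ} {u v : Fin n} (hne : u.val ≠ v.val)
    (h : ((u:ℤ)-(v:ℤ)).natAbs = t 1 ∨ ((u:ℤ)-(v:ℤ)).natAbs = t 2 ∨
      ((u:ℤ)-(v:ℤ)).natAbs = t 3) : (toeplitzGraph n 3 t).Adj u v := by
  refine ⟨fun he => hne (congrArg Fin.val he), ?_⟩
  rcases h with h | h | h
  exacts [⟨1, by omega, by omega, h⟩, ⟨2, by omega, by omega, h⟩, ⟨3, by omega, by omega, h⟩]

lemma nadj_intro' {n : ℕ} {t : ℕ → ℕ} {u v : Fin n}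
    (h : ((u:ℤ)-(v:ℤ)).natAbs ≠ t 1 ∧ ((u:ℤ)-(v:ℤ)).natAbs ≠ t 2 ∧
      ((u:ℤ)-(v:ℤ)).natAbs ≠ t 3) : ¬ (toeplitzGraph n 3 t).Adj u v := by
  rintro ⟨hne, i, h1, h2, h3⟩
  have : i = 1 ∨ i = 2 ∨ i = 3 := by omega
  rcases this with rfl | rfl | rfl <;> omega

lemma claw_of (n : ℕ) (t : ℕ → ℕ) (x d1 d2 d3 : ℤ)
    (hx : 0 ≤ x ∧ x < n)
    (h1 : 0 ≤ x + d1 ∧ x + d1 < n)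
    (h2 : 0 ≤ x + d2 ∧ x + d2 < n)
    (h3 : 0 ≤ x + d3 ∧ x + d3 < n)
    (a1 : d1.natAbs = t 1 ∨ d1.natAbs = t 2 ∨ d1.natAbs = t 3)
    (a2 : d2.natAbs = t 1 ∨ d2.natAbs = t 2 ∨ d2.natAbs = t 3)
    (a3 : d3.natAbs = t 1 ∨ d3.natAbs = t 2 ∨ d3.natAbs = t 3)
    (hd : d1 ≠ 0 ∧ d2 ≠ 0 ∧ d3 ≠ 0 ∧ d1 ≠ d2 ∧ d1 ≠ d3 ∧ d2 ≠ d3)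
    (n12 : (d1 - d2).natAbs ≠ t 1 ∧ (d1 - d2).natAbs ≠ t 2 ∧ (d1 - d2).natAbs ≠ t 3)
    (n13 : (d1 - d3).natAbs ≠ t 1 ∧ (d1 - d3).natAbs ≠ t 2 ∧ (d1 - d3).natAbs ≠ t 3)
    (n23 : (d2 - d3).natAbs ≠ t 1 ∧ (d2 - d3).natAbs ≠ t 2 ∧ (d2 - d3).natAbs ≠ t 3) :
    HasClaw (toeplitzGraph n 3 t) := by
  refine ⟨⟨x.toNat, ?_⟩, ⟨(x+d1).toNat, ?_⟩, ⟨(x+d2).toNat, ?_⟩,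
    ⟨(x+d3).toNat, ?_⟩, ?_, ?_, ?_, ?_, ?_, ?_, ?_, ?_, ?_⟩
  · clear a1 a2 a3 hd n12 n13 n23; omega
  · clear a1 a2 a3 hd n12 n13 n23; omega
  · clear a1 a2 a3 hd n12 n13 n23; omega
  · clear a1 a2 a3 hd n12 n13 n23; omega
  · apply adj_intro'
    · simp only [Fin.val_mk]; clear a1 a2 a3 n12 n13 n23; omega
    · simp only [Fin.val_mk]
      rcases a1 with h | h | h
      · exact Or.inl (by clear a2 a3 hd n12 n13 n23; omega)
      · exact Or.inr (Or.inl (by clear a2 a3 hd n12 n13 n23; omega))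
      · exact Or.inr (Or.inr (by clear a2 a3 hd n12 n13 n23; omega))
  · apply adj_intro'
    · simp only [Fin.val_mk]; clear a1 a2 a3 n12 n13 n23; omega
    · simp only [Fin.val_mk]
      rcases a2 with h | h | h
      · exact Or.inl (by clear a1 a3 hd n12 n13 n23; omega)
      · exact Or.inr (Or.inl (by clear a1 a3 hd n12 n13 n23; omega))
      · exact Or.inr (Or.inr (by clear a1 a3 hd n12 n13 n23; omega))
  · apply adj_intro'
    · simp only [Fin.val_mk]; clear a1 a2 a3 n12 n13 n23; omega
    · simp only [Fin.val_mk]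
      rcases a3 with h | h | h
      · exact Or.inl (by clear a1 a2 hd n12 n13 n23; omega)
      · exact Or.inr (Or.inl (by clear a1 a2 hd n12 n13 n23; omega))
      · exact Or.inr (Or.inr (by clear a1 a2 hd n12 n13 n23; omega))
  · simp only [ne_eq, Fin.mk.injEq]; clear a1 a2 a3 n12 n13 n23; omega
  · simp only [ne_eq, Fin.mk.injEq]; clear a1 a2 a3 n12 n13 n23; omega
  · simp only [ne_eq, Fin.mk.injEq]; clear a1 a2 a3 n12 n13 n23; omega
  · apply nadj_intro'
    refine ⟨?_, ?_, ?_⟩ <;> (simp only [Fin.val_mk]; clear a1 a2 a3 hd n13 n23; omega)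
  · apply nadj_intro'
    refine ⟨?_, ?_, ?_⟩ <;> (simp only [Fin.val_mk]; clear a1 a2 a3 hd n12 n23; omega)
  · apply nadj_intro'
    refine ⟨?_, ?_, ?_⟩ <;> (simp only [Fin.val_mk]; clear a1 a2 a3 hd n12 n13; omega)

set_option maxHeartbeats 1000000 in
lemma arith_iff (n a b c : ℕ)
    (hpos : 0 < a) (h12 : a < b) (h23 : b < c) (h3n : c < n)
    (hn : n + 1 = 2 * c ∨ n + 2 = 2 * c ∨ n + 3 = 2 * c) :
    (¬ ((c < n ∧ b ≠ 2 * a ∧ c ≠ 2 * a ∧ c ≠ a + b ∧ c ≠ 2 * b) ∨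
       (b + c < n ∧ b ≠ 2 * a) ∨
       (b + c < n ∧ c ≠ a + b ∧ c ≠ 2 * a) ∨
       (a + c < n ∧ c ≠ a + b ∧ c ≠ 2 * b) ∨
       (a + b < n ∧ b ≠ 2 * a ∧ c ≠ 2 * a ∧ c ≠ a + b) ∨
       (a + c < n ∧ b ≠ 2 * a ∧ c ≠ 2 * a ∧ c ≠ a + b) ∨
       (2 * b < n ∧ c ≠ 2 * b ∧ b ≠ 2 * a ∧ c ≠ a + b) ∨
       (b + c < n ∧ c ≠ 2 * b ∧ c ≠ a + b))) ↔
      ((b = 2 * a ∧ c = 3 * a ∧ (n + 1 = 6 * a ∨ n + 2 = 6 * a ∨ n + 3 = 6 * a)) ∨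
       (a = 1 ∧ b + 1 = c ∧ n + 1 = 2 * c) ∨
       (a = 1 ∧ b + 1 = c ∧ n + 2 = 2 * c) ∨
       (a = 1 ∧ b + 1 = c ∧ n + 3 = 2 * c) ∨
       (a = 2 ∧ b + 2 = c ∧ n + 2 = 2 * c) ∨
       (a = 2 ∧ b + 2 = c ∧ n + 3 = 2 * c) ∨
       (a = 3 ∧ b + 3 = c ∧ n + 3 = 2 * c) ∨
       (a = 2 ∧ b = 4 ∧ c = 5 ∧ n = 7) ∨
       (a = 1 ∧ b = 2 ∧ c = 4 ∧ n = 6) ∨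
       (a = 1 ∧ b = 2 ∧ c = 4 ∧ n = 5) ∨
       (a = 2 ∧ b = 3 ∧ c = 4 ∧ n = 6) ∨
       (a = 2 ∧ b = 3 ∧ c = 4 ∧ n = 5) ∨
       (a = 3 ∧ b = 5 ∧ c = 6 ∧ n = 9)) := by
  constructor
  · intro h
    have n2 : ¬ (b + c < n ∧ b ≠ 2 * a) := fun hp => h (Or.inr (Or.inl hp))
    have n3 : ¬ (b + c < n ∧ c ≠ a + b ∧ c ≠ 2 * a) := fun hp => h (Or.inr (Or.inr (Or.inl hp)))
    have n4 : ¬ (a + c < n ∧ c ≠ a + b ∧ c ≠ 2 * b) := fun hp => h (Or.inr (Or.inr (Or.inr (Or.inl hp))))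
    have n5 : ¬ (a + b < n ∧ b ≠ 2 * a ∧ c ≠ 2 * a ∧ c ≠ a + b) := fun hp => h (Or.inr (Or.inr (Or.inr (Or.inr (Or.inl hp)))))
    have n7 : ¬ (2 * b < n ∧ c ≠ 2 * b ∧ b ≠ 2 * a ∧ c ≠ a + b) := fun hp => h (Or.inr (Or.inr (Or.inr (Or.inr (Or.inr (Or.inr (Or.inl hp)))))))
    have q1 : b = 2 * a ∨ (b ≠ 2 * a ∧ c = a + b) ∨ (b ≠ 2 * a ∧ c ≠ a + b ∧ c = 2 * a) ∨
        (b ≠ 2 * a ∧ c ≠ a + b ∧ c ≠ 2 * a ∧ c = 2 * b) := by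
      have n1 : ¬ (c < n ∧ b ≠ 2 * a ∧ c ≠ 2 * a ∧ c ≠ a + b ∧ c ≠ 2 * b) := fun hp => h (Or.inl hp)
      clear n2 n3 n4 n5 n7 hn h; omega
    clear h
    rcases q1 with q | ⟨q, q'⟩ | ⟨q, q', q''⟩ | ⟨q, q', q'', q3⟩
    · clear n2 n5 n7
      have q4 : c = 3 * a ∨ (a = 1 ∧ b = 2 ∧ c = 4 ∧ (n = 6 ∨ n = 5)) ∨
          (a = 2 ∧ b = 4 ∧ c = 5 ∧ n = 7) := by omega
      rcases q4 with q4 | ⟨r1, r2, r3, r4 | r4⟩ | ⟨r1, r2, r3, r4⟩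
      · exact Or.inl ⟨q, q4, by omega⟩
      · exact Or.inr (Or.inr (Or.inr (Or.inr (Or.inr (Or.inr (Or.inr (Or.inr (Or.inl ⟨r1, r2, r3, r4⟩))))))))
      · exact Or.inr (Or.inr (Or.inr (Or.inr (Or.inr (Or.inr (Or.inr (Or.inr (Or.inr (Or.inl ⟨r1, r2, r3, r4⟩)))))))))
      · exact Or.inr (Or.inr (Or.inr (Or.inr (Or.inr (Or.inr (Or.inr (Or.inl ⟨r1, r2, r3, r4⟩)))))))
    · clear n3 n4 n5 n7
      have q4 : (a = 1 ∧ b + 1 = c ∧ (n + 1 = 2 * c ∨ n + 2 = 2 * c ∨ n + 3 = 2 * c)) ∨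
          (a = 2 ∧ b + 2 = c ∧ (n + 2 = 2 * c ∨ n + 3 = 2 * c)) ∨
          (a = 3 ∧ b + 3 = c ∧ n + 3 = 2 * c) := by omega
      rcases q4 with ⟨r1, r2, r3 | r3 | r3⟩ | ⟨r1, r2, r3 | r3⟩ | ⟨r1, r2, r3⟩
      · exact Or.inr (Or.inl ⟨r1, r2, r3⟩)
      · exact Or.inr (Or.inr (Or.inl ⟨r1, r2, r3⟩))
      · exact Or.inr (Or.inr (Or.inr (Or.inl ⟨r1, r2, r3⟩)))
      · exact Or.inr (Or.inr (Or.inr (Or.inr (Or.inl ⟨r1, r2, r3⟩))))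
      · exact Or.inr (Or.inr (Or.inr (Or.inr (Or.inr (Or.inl ⟨r1, r2, r3⟩)))))
      · exact Or.inr (Or.inr (Or.inr (Or.inr (Or.inr (Or.inr (Or.inl ⟨r1, r2, r3⟩))))))
    · clear n2 n3 n5
      have q4 : (a = 2 ∧ b = 3 ∧ c = 4 ∧ (n = 6 ∨ n = 5)) ∨
          (a = 3 ∧ b = 5 ∧ c = 6 ∧ n = 9) := by omega
      rcases q4 with ⟨r1, r2, r3, r4 | r4⟩ | ⟨r1, r2, r3, r4⟩
      · exact Or.inr (Or.inr (Or.inr (Or.inr (Or.inr (Or.inr (Or.inr (Or.inr (Or.inr (Or.inr (Or.inl ⟨r1, r2, r3, r4⟩))))))))))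
      · exact Or.inr (Or.inr (Or.inr (Or.inr (Or.inr (Or.inr (Or.inr (Or.inr (Or.inr (Or.inr (Or.inr (Or.inl ⟨r1, r2, r3, r4⟩)))))))))))
      · exact Or.inr (Or.inr (Or.inr (Or.inr (Or.inr (Or.inr (Or.inr (Or.inr (Or.inr (Or.inr (Or.inr (Or.inr ⟨r1, r2, r3, r4⟩)))))))))))
    · clear n3 n4 n7
      exact absurd rfl (by omega : ¬ (0 : ℕ) = 0)
  · intro h hF
    rcases h with h|h|h|h|h|h|h|h|h|h|h|h|h <;>
      rcases hF with hF|hF|hF|hF|hF|hF|hF|hF <;> omega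

set_option maxHeartbeats 4000000 in
lemma noclaw_s14 (n a b c : ℕ) (vA vB vC vD : ℕ)
    (hpos : 0 < a) (h12 : a < b) (h23 : b < c) (h3n : c < n)
    (hR : (b = 2 * a ∧ c = 3 * a ∧ (n + 1 = 6 * a ∨ n + 2 = 6 * a ∨ n + 3 = 6 * a)) ∨
       (a = 1 ∧ b + 1 = c ∧ n + 1 = 2 * c) ∨
       (a = 1 ∧ b + 1 = c ∧ n + 2 = 2 * c) ∨
       (a = 1 ∧ b + 1 = c ∧ n + 3 = 2 * c) ∨
       (a = 2 ∧ b + 2 = c ∧ n + 2 = 2 * c) ∨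
       (a = 2 ∧ b + 2 = c ∧ n + 3 = 2 * c) ∨
       (a = 3 ∧ b + 3 = c ∧ n + 3 = 2 * c) ∨
       (a = 2 ∧ b = 4 ∧ c = 5 ∧ n = 7) ∨
       (a = 1 ∧ b = 2 ∧ c = 4 ∧ n = 6) ∨
       (a = 1 ∧ b = 2 ∧ c = 4 ∧ n = 5) ∨
       (a = 2 ∧ b = 3 ∧ c = 4 ∧ n = 6) ∨
       (a = 2 ∧ b = 3 ∧ c = 4 ∧ n = 5) ∨
       (a = 3 ∧ b = 5 ∧ c = 6 ∧ n = 9))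
    (hA : vA < n) (hB : vB < n) (hC : vC < n) (hD : vD < n)
    (dAB : ((vA : ℤ) - vB).natAbs = a ∨ ((vA : ℤ) - vB).natAbs = b ∨ ((vA : ℤ) - vB).natAbs = c)
    (dAC : ((vA : ℤ) - vC).natAbs = a ∨ ((vA : ℤ) - vC).natAbs = b ∨ ((vA : ℤ) - vC).natAbs = c)
    (dAD : ((vA : ℤ) - vD).natAbs = a ∨ ((vA : ℤ) - vD).natAbs = b ∨ ((vA : ℤ) - vD).natAbs = c)
    (mBC1 : ((vB : ℤ) - vC).natAbs ≠ a) (mBC2 : ((vB : ℤ) - vC).natAbs ≠ b) (mBC3 : ((vB : ℤ) - vC).natAbs ≠ c)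
    (mBD1 : ((vB : ℤ) - vD).natAbs ≠ a) (mBD2 : ((vB : ℤ) - vD).natAbs ≠ b) (mBD3 : ((vB : ℤ) - vD).natAbs ≠ c)
    (mCD1 : ((vC : ℤ) - vD).natAbs ≠ a) (mCD2 : ((vC : ℤ) - vD).natAbs ≠ b) (mCD3 : ((vC : ℤ) - vD).natAbs ≠ c)
    (eBC : vB ≠ vC) (eBD : vB ≠ vD) (eCD : vC ≠ vD) :
    False := by
  rcases hR with ⟨r1, r2, r3⟩ | ⟨r1, r2, r3⟩ | ⟨r1, r2, r3⟩ | ⟨r1, r2, r3⟩ | ⟨r1, r2, r3⟩ |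
    ⟨r1, r2, r3⟩ | ⟨r1, r2, r3⟩ | ⟨r1, r2, r3, r4⟩ | ⟨r1, r2, r3, r4⟩ | ⟨r1, r2, r3, r4⟩ |
    ⟨r1, r2, r3, r4⟩ | ⟨r1, r2, r3, r4⟩ | ⟨r1, r2, r3, r4⟩ <;>
    rcases dAB with h1 | h1 | h1 <;> rcases dAC with h2 | h2 | h2 <;>
    rcases dAD with h3 | h3 | h3 <;> omega

/-- Classification of claw-free `T_n⟨t 1, t 2, t 3⟩` of order
`n = 2 * t 3 - i` for `i ∈ {1, 2, 3}`. -/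
theorem stmt_14 (n : ℕ) (t : ℕ → ℕ)
    (hpos : 0 < t 1) (h12 : t 1 < t 2) (h23 : t 2 < t 3) (h3n : t 3 < n)
    (hn : n + 1 = 2 * t 3 ∨ n + 2 = 2 * t 3 ∨ n + 3 = 2 * t 3) :
    ClawFree (toeplitzGraph n 3 t) ↔
      ((t 2 = 2 * t 1 ∧ t 3 = 3 * t 1 ∧
          (n + 1 = 6 * t 1 ∨ n + 2 = 6 * t 1 ∨ n + 3 = 6 * t 1)) ∨
       (t 1 = 1 ∧ t 2 + 1 = t 3 ∧ n + 1 = 2 * t 3) ∨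
       (t 1 = 1 ∧ t 2 + 1 = t 3 ∧ n + 2 = 2 * t 3) ∨
       (t 1 = 1 ∧ t 2 + 1 = t 3 ∧ n + 3 = 2 * t 3) ∨
       (t 1 = 2 ∧ t 2 + 2 = t 3 ∧ n + 2 = 2 * t 3) ∨
       (t 1 = 2 ∧ t 2 + 2 = t 3 ∧ n + 3 = 2 * t 3) ∨
       (t 1 = 3 ∧ t 2 + 3 = t 3 ∧ n + 3 = 2 * t 3) ∨
       (t 1 = 2 ∧ t 2 = 4 ∧ t 3 = 5 ∧ n = 7) ∨
       (t 1 = 1 ∧ t 2 = 2 ∧ t 3 = 4 ∧ n = 6) ∨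
       (t 1 = 1 ∧ t 2 = 2 ∧ t 3 = 4 ∧ n = 5) ∨
       (t 1 = 2 ∧ t 2 = 3 ∧ t 3 = 4 ∧ n = 6) ∨
       (t 1 = 2 ∧ t 2 = 3 ∧ t 3 = 4 ∧ n = 5) ∨
       (t 1 = 3 ∧ t 2 = 5 ∧ t 3 = 6 ∧ n = 9)) := by
  constructor
  · intro hCF
    refine (arith_iff n (t 1) (t 2) (t 3) hpos h12 h23 h3n hn).mp ?_
    intro hF
    apply hCF
    rcases hF with ⟨hf, c1, c2, c3, c4⟩ | ⟨hf, c1⟩ | ⟨hf, c1, c2⟩ | ⟨hf, c1, c2⟩ |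
        ⟨hf, c1, c2, c3⟩ | ⟨hf, c1, c2, c3⟩ | ⟨hf, c1, c2, c3⟩ | ⟨hf, c1, c2⟩
    · exact claw_of n t 0 (t 1) (t 2) (t 3) (by omega) (by omega) (by omega) (by omega)
        (by omega) (by omega) (by omega) (by omega)
        ⟨by omega, by omega, by omega⟩ ⟨by omega, by omega, by omega⟩ ⟨by omega, by omega, by omega⟩
    · exact claw_of n t (t 3) (t 1) (t 2) (-(t 3)) (by omega) (by omega) (by omega) (by omega)
        (by omega) (by omega) (by omega) (by omega)
        ⟨by omega, by omega, by omega⟩ ⟨by omega, by omega, by omega⟩ ⟨by omega, by omega, by omega⟩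
    · exact claw_of n t (t 2) (t 1) (-(t 2)) (t 3) (by omega) (by omega) (by omega) (by omega)
        (by omega) (by omega) (by omega) (by omega)
        ⟨by omega, by omega, by omega⟩ ⟨by omega, by omega, by omega⟩ ⟨by omega, by omega, by omega⟩
    · exact claw_of n t (t 1) (-(t 1)) (t 2) (t 3) (by omega) (by omega) (by omega) (by omega)
        (by omega) (by omega) (by omega) (by omega)
        ⟨by omega, by omega, by omega⟩ ⟨by omega, by omega, by omega⟩ ⟨by omega, by omega, by omega⟩
    · exact claw_of n t (t 1) (-(t 1)) (t 1) (t 2) (by omega) (by omega) (by omega) (by omega)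
        (by omega) (by omega) (by omega) (by omega)
        ⟨by omega, by omega, by omega⟩ ⟨by omega, by omega, by omega⟩ ⟨by omega, by omega, by omega⟩
    · exact claw_of n t (t 1) (-(t 1)) (t 1) (t 3) (by omega) (by omega) (by omega) (by omega)
        (by omega) (by omega) (by omega) (by omega)
        ⟨by omega, by omega, by omega⟩ ⟨by omega, by omega, by omega⟩ ⟨by omega, by omega, by omega⟩
    · exact claw_of n t (t 2) (-(t 2)) (t 1) (t 2) (by omega) (by omega) (by omega) (by omega)
        (by omega) (by omega) (by omega) (by omega)
        ⟨by omega, by omega, by omega⟩ ⟨by omega, by omega, by omega⟩ ⟨by omega, by omega, by omega⟩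
    · exact claw_of n t (t 2) (-(t 2)) (t 2) (t 3) (by omega) (by omega) (by omega) (by omega)
        (by omega) (by omega) (by omega) (by omega)
        ⟨by omega, by omega, by omega⟩ ⟨by omega, by omega, by omega⟩ ⟨by omega, by omega, by omega⟩
  · rintro hR ⟨A, B, C, D, hAB, hAC, hAD, hBC, hBD, hCD, nBC, nBD, nCD⟩
    obtain ⟨eAB, dAB⟩ := adj_elim' hAB
    obtain ⟨eAC, dAC⟩ := adj_elim' hAC
    obtain ⟨eAD, dAD⟩ := adj_elim' hAD
    obtain ⟨mBC1, mBC2, mBC3⟩ := nadj_elim' hBC nBC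
    obtain ⟨mBD1, mBD2, mBD3⟩ := nadj_elim' hBD nBD
    obtain ⟨mCD1, mCD2, mCD3⟩ := nadj_elim' hCD nCD
    exact noclaw_s14 n (t 1) (t 2) (t 3) A.val B.val C.val D.val hpos h12 h23 h3n hR
      A.isLt B.isLt C.isLt D.isLt dAB dAC dAD mBC1 mBC2 mBC3 mBD1 mBD2 mBD3 mCD1 mCD2 mCD3
      (fun h => hBC (Fin.ext h)) (fun h => hBD (Fin.ext h)) (fun h => hCD (Fin.ext h))
end

section
/- Let G be the (n,k,t)-cocoonery T_n⟨t, 2t, …, kt⟩ with k ≥ 2 and n > kt. Then G is a line graph (i.e., G is isomorphic to the line graph of some simple graph) if and only if either (a) k = 2 and 2t + 1 ≤ n ≤ 5t, or (b) k ≥ 3 and kt + 1 ≤ n ≤ (k+1)t. -/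
def Shares {V : Type*} (e f : Sym2 V) : Prop := ∃ w, w ∈ e ∧ w ∈ f

lemma Shares.symm {V : Type*} {e f : Sym2 V} (h : Shares e f) : Shares f e := by
  obtain ⟨w, h1, h2⟩ := h; exact ⟨w, h2, h1⟩

lemma sym2_eq_of_two_mem {V : Type*} {e f : Sym2 V} {x y : V} (hxy : x ≠ y)
    (hx : x ∈ e) (hy : y ∈ e) (hx' : x ∈ f) (hy' : y ∈ f) : e = f :=
  Sym2.eq_of_ne_mem hxy hx hy hx' hy'

lemma star_of {V : Type*} {A B C X : Sym2 V}
    (iAB : Shares A B) (iBC : Shares B C) (iAC : Shares A C)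
    (hXC : Shares X C) (hXA : ¬ Shares X A) (hXB : ¬ Shares X B) :
    ∃ w, w ∈ A ∧ w ∈ B ∧ w ∈ C := by
  obtain ⟨p, hpA, hpB⟩ := iAB
  obtain ⟨q, hqB, hqC⟩ := iBC
  obtain ⟨r, hrA, hrC⟩ := iAC
  by_cases hpq : p = q
  · exact ⟨p, hpA, hpB, hpq ▸ hqC⟩
  by_cases hpr : p = r
  · exact ⟨p, hpA, hpB, hpr ▸ hrC⟩
  by_cases hqr : q = r
  · exact ⟨q, hqr ▸ hrA, hqB, hqC⟩
  · have hC : C = s(q, r) := ((Sym2.mem_and_mem_iff hqr).mp ⟨hqC, hrC⟩)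
    obtain ⟨x, hxX, hxC⟩ := hXC
    rw [hC, Sym2.mem_iff] at hxC
    rcases hxC with rfl | rfl
    · exact absurd ⟨x, hxX, hqB⟩ hXB
    · exact absurd ⟨x, hxX, hrA⟩ hXA

lemma no_k5e {V : Type*} {A B C U W : Sym2 V}
    (hAB : A ≠ B) (hAC : A ≠ C) (hBC : B ≠ C)
    (hUA : U ≠ A) (hUB : U ≠ B) (hUC : U ≠ C)
    (hUW : U ≠ W)
    (iAB : Shares A B) (iBC : Shares B C) (iAC : Shares A C)
    (iUA : Shares U A) (iUB : Shares U B) (iUC : Shares U C)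
    (iWA : Shares W A) (iWB : Shares W B) (iWC : Shares W C)
    (hUWn : ¬ Shares U W) : False := by
  obtain ⟨p, hpA, hpB⟩ := iAB
  obtain ⟨q, hqB, hqC⟩ := iBC
  obtain ⟨r, hrA, hrC⟩ := iAC
  have common : ∀ w : V, w ∈ A → w ∈ B → w ∈ C → False := by
    intro w hwA hwB hwC
    obtain ⟨a, hA⟩ := Sym2.mem_iff_exists.mp hwA
    obtain ⟨b, hB⟩ := Sym2.mem_iff_exists.mp hwB
    obtain ⟨c, hC⟩ := Sym2.mem_iff_exists.mp hwC
    have hab : a ≠ b := fun h => hAB (by rw [hA, hB, h])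
    have hac : a ≠ c := fun h => hAC (by rw [hA, hC, h])
    have hbc : b ≠ c := fun h => hBC (by rw [hB, hC, h])
    have key : ∀ Z : Sym2 V, Shares Z A → Shares Z B → Shares Z C → w ∉ Z → False := by
      intro Z zA zB zC hwZ
      obtain ⟨x, hxZ, hxA⟩ := zA
      obtain ⟨y, hyZ, hyB⟩ := zB
      obtain ⟨z, hzZ, hzC⟩ := zC
      rw [hA, Sym2.mem_iff] at hxA
      rw [hB, Sym2.mem_iff] at hyB
      rw [hC, Sym2.mem_iff] at hzC
      have haZ : a ∈ Z := by rcases hxA with h | h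
                             · exact absurd (h ▸ hxZ) hwZ
                             · exact h ▸ hxZ
      have hbZ : b ∈ Z := by rcases hyB with h | h
                             · exact absurd (h ▸ hyZ) hwZ
                             · exact h ▸ hyZ
      have hcZ : c ∈ Z := by rcases hzC with h | h
                             · exact absurd (h ▸ hzZ) hwZ
                             · exact h ▸ hzZ
      have hZ : Z = s(a, b) := (Sym2.mem_and_mem_iff hab).mp ⟨haZ, hbZ⟩
      rw [hZ, Sym2.mem_iff] at hcZ
      rcases hcZ with h | h
      · exact hac h.symm
      · exact hbc h.symm
    by_cases hwU : w ∈ U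
    · by_cases hwW : w ∈ W
      · exact hUWn ⟨w, hwU, hwW⟩
      · exact key W iWA iWB iWC hwW
    · exact key U iUA iUB iUC hwU
  by_cases hpq : p = q
  · exact common p hpA hpB (hpq ▸ hqC)
  by_cases hpr : p = r
  · exact common p hpA hpB (hpr ▸ hrC)
  by_cases hqr : q = r
  · exact common q (hqr ▸ hrA) hqB hqC
  · have hA : A = s(p, r) := (Sym2.mem_and_mem_iff hpr).mp ⟨hpA, hrA⟩
    have hB : B = s(p, q) := (Sym2.mem_and_mem_iff hpq).mp ⟨hpB, hqB⟩
    have hC : C = s(q, r) := (Sym2.mem_and_mem_iff hqr).mp ⟨hqC, hrC⟩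
    obtain ⟨x, hxU, hxA⟩ := iUA
    obtain ⟨y, hyU, hyB⟩ := iUB
    obtain ⟨z, hzU, hzC⟩ := iUC
    rw [hA, Sym2.mem_iff] at hxA
    rw [hB, Sym2.mem_iff] at hyB
    rw [hC, Sym2.mem_iff] at hzC
    rcases hxA with rfl | rfl
    · rcases hzC with rfl | rfl
      · exact hUB (sym2_eq_of_two_mem hpq hxU hzU
          (hB ▸ Sym2.mem_mk_left _ _) (hB ▸ Sym2.mem_mk_right _ _))
      · exact hUA (sym2_eq_of_two_mem hpr hxU hzU
          (hA ▸ Sym2.mem_mk_left _ _) (hA ▸ Sym2.mem_mk_right _ _))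
    · rcases hyB with rfl | rfl
      · exact hUA (sym2_eq_of_two_mem (fun h => hpr h.symm) hxU hyU
          (hA ▸ Sym2.mem_mk_right _ _) (hA ▸ Sym2.mem_mk_left _ _))
      · exact hUC (sym2_eq_of_two_mem (fun h => hqr h.symm) hxU hyU
          (hC ▸ Sym2.mem_mk_right _ _) (hC ▸ Sym2.mem_mk_left _ _))

lemma no_p62 {V : Type*} {E1 E2 E3 E4 E5 E6 : Sym2 V}
    (h34 : E3 ≠ E4)
    (i13 : Shares E1 E3) (i23 : Shares E2 E3) (i24 : Shares E2 E4)
    (i34 : Shares E3 E4) (i35 : Shares E3 E5) (i45 : Shares E4 E5) (i46 : Shares E4 E6)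
    (n14 : ¬ Shares E1 E4) (n15 : ¬ Shares E1 E5) (n25 : ¬ Shares E2 E5)
    (n26 : ¬ Shares E2 E6) (n36 : ¬ Shares E3 E6) : False := by
  obtain ⟨w, hw2, hw3, hw4⟩ := star_of i23 i34 i24 i46.symm
    (fun h => n26 h.symm) (fun h => n36 h.symm)
  obtain ⟨w', hw'4, hw'5, hw'3⟩ := star_of i45 i35.symm i34.symm i13 n14 n15
  by_cases hww : w = w'
  · exact n25 ⟨w, hw2, hww ▸ hw'5⟩
  · exact h34 (sym2_eq_of_two_mem hww hw3 hw'3 hw4 hw'4)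


lemma toep_adj (n k t : ℕ) (x y : Fin n) :
    (toeplitzGraph n k (fun i => i * t)).Adj x y ↔
      x ≠ y ∧ ∃ m, 1 ≤ m ∧ m ≤ k ∧ ((x : ℕ) = (y : ℕ) + m * t ∨ (y : ℕ) = (x : ℕ) + m * t) := by
  constructor
  · rintro ⟨ne, m, h1, h2, h3⟩
    simp only at h3
    refine ⟨ne, m, h1, h2, ?_⟩
    generalize hM : m * t = M at h3 ⊢
    omega
  · rintro ⟨ne, m, h1, h2, h3⟩
    refine ⟨ne, m, h1, h2, ?_⟩
    show ((x : ℤ) - (y : ℤ)).natAbs = m * t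
    generalize hM : m * t = M at h3 ⊢
    omega


lemma modeq_iff (k t a b : ℕ) (ht : 0 < t) (ha : a < (k+1)*t) (hb : b < (k+1)*t) :
    (∃ m, 1 ≤ m ∧ m ≤ k ∧ (a = b + m * t ∨ b = a + m * t)) ↔ (a % t = b % t ∧ a ≠ b) := by
  have aux : ∀ a b : ℕ, b < a → a < (k+1)*t → a % t = b % t →
      ∃ m, 1 ≤ m ∧ m ≤ k ∧ a = b + m * t := by
    intro a b hba ha hmod
    obtain ⟨m, hm⟩ := (Nat.modEq_iff_dvd' hba.le).mp (Nat.ModEq.symm hmod)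
    have e1 : m * t = t * m := by ring
    have hm1 : 1 ≤ m := by
      rcases Nat.eq_zero_or_pos m with h | h
      · subst h; omega
      · exact h
    have hmk : m ≤ k := by
      have h2 : t * m < t * (k+1) := by
        have h3 : (k+1)*t = t*(k+1) := by ring
        omega
      have := Nat.lt_of_mul_lt_mul_left h2
      omega
    exact ⟨m, hm1, hmk, by omega⟩
  have fwd : ∀ a b m : ℕ, 1 ≤ m → a = b + m * t → a % t = b % t ∧ a ≠ b := by
    intro a b m h1 h3
    subst h3
    have h0 : 0 < m * t := by positivity
    exact ⟨Nat.add_mul_mod_self_right b m t, by omega⟩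
  constructor
  · rintro ⟨m, h1, h2, h3 | h3⟩
    · exact fwd a b m h1 h3
    · obtain ⟨e, ne⟩ := fwd b a m h1 h3
      exact ⟨e.symm, ne.symm⟩
  · rintro ⟨hmod, hab⟩
    rcases Nat.lt_or_ge a b with h | h
    · obtain ⟨m, h1, h2, h3⟩ := aux b a h hb hmod.symm
      exact ⟨m, h1, h2, Or.inr h3⟩
    · obtain ⟨m, h1, h2, h3⟩ := aux a b (by omega) ha hmod
      exact ⟨m, h1, h2, Or.inl h3⟩

lemma modeq_iff2 (t a b : ℕ) (ht : 0 < t) :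
    (∃ m, 1 ≤ m ∧ m ≤ 2 ∧ (a = b + m * t ∨ b = a + m * t)) ↔
      (a % t = b % t ∧ a ≠ b ∧ a / t ≤ b / t + 2 ∧ b / t ≤ a / t + 2) := by
  have aux : ∀ a b m : ℕ, 1 ≤ m → a = b + m * t →
      a % t = b % t ∧ a ≠ b ∧ a / t = b / t + m := by
    intro a b m h1 h3
    subst h3
    have h0 : 0 < m * t := by positivity
    exact ⟨Nat.add_mul_mod_self_right b m t, by omega, Nat.add_mul_div_right b m ht⟩
  have aux2 : ∀ a b : ℕ, b < a → a % t = b % t → a / t ≤ b / t + 2 →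
      ∃ m, 1 ≤ m ∧ m ≤ 2 ∧ a = b + m * t := by
    intro a b hba hmod hd
    obtain ⟨m, hm⟩ := (Nat.modEq_iff_dvd' hba.le).mp (Nat.ModEq.symm hmod)
    have e1 : m * t = t * m := by ring
    have hm1 : 1 ≤ m := by
      rcases Nat.eq_zero_or_pos m with h | h
      · subst h; omega
      · exact h
    have heq : a = b + m * t := by omega
    obtain ⟨-, -, hdiv⟩ := aux a b m hm1 heq
    exact ⟨m, hm1, by omega, heq⟩
  constructor
  · rintro ⟨m, h1, h2, h3 | h3⟩
    · obtain ⟨hm, hne, hd⟩ := aux a b m h1 h3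
      exact ⟨hm, hne, by omega, by omega⟩
    · obtain ⟨hm, hne, hd⟩ := aux b a m h1 h3
      exact ⟨hm.symm, hne.symm, by omega, by omega⟩
  · rintro ⟨hmod, hab, hd1, hd2⟩
    rcases Nat.lt_or_ge a b with h | h
    · obtain ⟨m, h1, h2, h3⟩ := aux2 b a h hmod.symm hd2
      exact ⟨m, h1, h2, Or.inr h3⟩
    · obtain ⟨m, h1, h2, h3⟩ := aux2 a b (by omega) hmod hd1
      exact ⟨m, h1, h2, Or.inl h3⟩


def AE (n t : ℕ) (ht : 0 < t) : Fin n → Sym2 (Fin t ⊕ Fin n) :=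
  fun i => s(Sum.inl ⟨(i : ℕ) % t, Nat.mod_lt _ ht⟩, Sum.inr i)

lemma AE_inj (n t : ℕ) (ht : 0 < t) : Function.Injective (AE n t ht) := by
  intro i j h
  rw [AE, AE, Sym2.eq_iff] at h
  rcases h with ⟨-, h2⟩ | ⟨h1, -⟩
  · exact Sum.inr.inj h2
  · exact absurd h1 (by simp)

def HA (n t : ℕ) (ht : 0 < t) : SimpleGraph (Fin t ⊕ Fin n) :=
  SimpleGraph.fromEdgeSet (Set.range (AE n t ht))

lemma HA_edgeSet (n t : ℕ) (ht : 0 < t) : (HA n t ht).edgeSet = Set.range (AE n t ht) := by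
  rw [HA, SimpleGraph.edgeSet_fromEdgeSet]
  refine subset_antisymm Set.diff_subset ?_
  rintro e ⟨i, rfl⟩
  exact ⟨⟨i, rfl⟩, by simp [AE, Sym2.mk_isDiag_iff]⟩

def fA (n t : ℕ) (ht : 0 < t) (i : Fin n) : (HA n t ht).edgeSet :=
  ⟨AE n t ht i, by rw [HA_edgeSet]; exact ⟨i, rfl⟩⟩

lemma fA_bij (n t : ℕ) (ht : 0 < t) : Function.Bijective (fA n t ht) := by
  constructor
  · intro i j h
    exact AE_inj n t ht (Subtype.ext_iff.mp h)
  · rintro ⟨e, he⟩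
    rw [HA_edgeSet] at he
    obtain ⟨i, hi⟩ := he
    exact ⟨i, Subtype.ext hi⟩

lemma consA (n k t : ℕ) (ht : 0 < t) (hn : n ≤ (k+1)*t) :
    ∃ (W : Type) (H : SimpleGraph W),
      Nonempty (toeplitzGraph n k (fun i => i * t) ≃g H.lineGraph) := by
  classical
  refine ⟨Fin t ⊕ Fin n, HA n t ht, ⟨⟨Equiv.ofBijective (fA n t ht) (fA_bij n t ht), ?_⟩⟩⟩
  intro a b
  show (HA n t ht).lineGraph.Adj (fA n t ht a) (fA n t ht b) ↔ _
  rw [SimpleGraph.lineGraph_adj_iff_exists, toep_adj]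
  have hne : (fA n t ht a ≠ fA n t ht b) ↔ a ≠ b := by
    constructor
    · intro h hab; exact h (by rw [hab])
    · intro h hab; exact h ((fA_bij n t ht).1 hab)
  have hsh : (∃ v, v ∈ (↑(fA n t ht a) : Sym2 (Fin t ⊕ Fin n)) ∧
      v ∈ (↑(fA n t ht b) : Sym2 (Fin t ⊕ Fin n))) ↔
      ((a : ℕ) % t = (b : ℕ) % t ∨ a = b) := by
    show (∃ v, v ∈ AE n t ht a ∧ v ∈ AE n t ht b) ↔ _
    constructor
    · rintro ⟨v, hva, hvb⟩
      rw [AE, Sym2.mem_iff] at hva hvb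
      rcases hva with rfl | rfl <;> rcases hvb with h | h
      · exact Or.inl (congrArg Fin.val (Sum.inl.inj h))
      · exact absurd h (by simp)
      · exact absurd h.symm (by simp)
      · exact Or.inr (Sum.inr.inj h)
    · rintro (h | rfl)
      · refine ⟨Sum.inl ⟨(a : ℕ) % t, Nat.mod_lt _ ht⟩, ?_, ?_⟩
        · rw [AE]; simp
        · rw [AE]; simp [h]
      · exact ⟨Sum.inr a, by rw [AE]; simp, by rw [AE]; simp⟩
  rw [hne, hsh]
  have hA : (a : ℕ) < (k+1)*t := lt_of_lt_of_le a.isLt hn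
  have hB : (b : ℕ) < (k+1)*t := lt_of_lt_of_le b.isLt hn
  rw [modeq_iff k t a b ht hA hB]
  constructor
  · rintro ⟨hab, h | h⟩
    · exact ⟨hab, h, fun hv => hab (Fin.ext hv)⟩
    · exact absurd h hab
  · rintro ⟨hab, h1, -⟩
    exact ⟨hab, Or.inl h1⟩


/-- endpoints of the bull's edges -/
def bp1 : Fin 5 → Fin 5 := ![0, 1, 1, 2, 3]
def bp2 : Fin 5 → Fin 5 := ![1, 2, 3, 3, 4]

def rB (n t : ℕ) (ht : 0 < t) (i : Fin n) : Fin t := ⟨(i : ℕ) % t, Nat.mod_lt _ ht⟩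

def qB (n t : ℕ) (hn : n ≤ 5 * t) (i : Fin n) : Fin 5 :=
  ⟨(i : ℕ) / t, by have := i.isLt; exact Nat.div_lt_of_lt_mul (by omega)⟩

def BE (n t : ℕ) (ht : 0 < t) (hn : n ≤ 5 * t) : Fin n → Sym2 (Fin t × Fin 5) :=
  fun i => s((rB n t ht i, bp1 (qB n t hn i)), (rB n t ht i, bp2 (qB n t hn i)))

lemma bp_ne : ∀ j : Fin 5, bp1 j ≠ bp2 j := by decide

lemma bp_inj : ∀ j j' : Fin 5,
    ((bp1 j = bp1 j' ∧ bp2 j = bp2 j') ∨ (bp1 j = bp2 j' ∧ bp2 j = bp1 j')) → j = j' := by decide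

lemma bp_touch : ∀ j j' : Fin 5,
    ((bp1 j = bp1 j' ∨ bp1 j = bp2 j') ∨ (bp2 j = bp1 j' ∨ bp2 j = bp2 j')) ↔
      ((j : ℕ) ≤ (j' : ℕ) + 2 ∧ (j' : ℕ) ≤ (j : ℕ) + 2) := by decide

lemma BE_inj (n t : ℕ) (ht : 0 < t) (hn : n ≤ 5 * t) : Function.Injective (BE n t ht hn) := by
  intro i j h
  rw [BE, BE, Sym2.eq_iff] at h
  have hmod : (i : ℕ) % t = (j : ℕ) % t := by
    rcases h with ⟨h1, -⟩ | ⟨h1, -⟩ <;>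
      exact congrArg Fin.val (congrArg Prod.fst h1 : rB n t ht i = rB n t ht j)
  have hdiv : (i : ℕ) / t = (j : ℕ) / t := by
    have key : qB n t hn i = qB n t hn j := by
      apply bp_inj
      rcases h with ⟨h1, h2⟩ | ⟨h1, h2⟩
      · exact Or.inl ⟨congrArg Prod.snd h1, congrArg Prod.snd h2⟩
      · exact Or.inr ⟨congrArg Prod.snd h1, congrArg Prod.snd h2⟩
    exact congrArg Fin.val key
  have e1 := Nat.div_add_mod (i : ℕ) t
  have e2 := Nat.div_add_mod (j : ℕ) t
  apply Fin.ext
  have : t * ((i : ℕ) / t) = t * ((j : ℕ) / t) := by rw [hdiv]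
  omega

def HB (n t : ℕ) (ht : 0 < t) (hn : n ≤ 5 * t) : SimpleGraph (Fin t × Fin 5) :=
  SimpleGraph.fromEdgeSet (Set.range (BE n t ht hn))

lemma HB_edgeSet (n t : ℕ) (ht : 0 < t) (hn : n ≤ 5 * t) :
    (HB n t ht hn).edgeSet = Set.range (BE n t ht hn) := by
  rw [HB, SimpleGraph.edgeSet_fromEdgeSet]
  refine subset_antisymm Set.diff_subset ?_
  rintro e ⟨i, rfl⟩
  refine ⟨⟨i, rfl⟩, ?_⟩
  rw [BE]
  simp only [Set.mem_setOf_eq, Sym2.mem_diagSet, Sym2.mk_isDiag_iff]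
  intro hcon
  exact bp_ne (qB n t hn i) (congrArg Prod.snd hcon)

def fB (n t : ℕ) (ht : 0 < t) (hn : n ≤ 5 * t) (i : Fin n) : (HB n t ht hn).edgeSet :=
  ⟨BE n t ht hn i, by rw [HB_edgeSet]; exact ⟨i, rfl⟩⟩

lemma fB_bij (n t : ℕ) (ht : 0 < t) (hn : n ≤ 5 * t) : Function.Bijective (fB n t ht hn) := by
  constructor
  · intro i j h
    exact BE_inj n t ht hn (Subtype.ext_iff.mp h)
  · rintro ⟨e, he⟩
    rw [HB_edgeSet] at he
    obtain ⟨i, hi⟩ := he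
    exact ⟨i, Subtype.ext hi⟩

lemma consB (n t : ℕ) (ht : 0 < t) (hn : n ≤ 5 * t) :
    ∃ (W : Type) (H : SimpleGraph W),
      Nonempty (toeplitzGraph n 2 (fun i => i * t) ≃g H.lineGraph) := by
  classical
  refine ⟨Fin t × Fin 5, HB n t ht hn,
    ⟨⟨Equiv.ofBijective (fB n t ht hn) (fB_bij n t ht hn), ?_⟩⟩⟩
  intro a b
  show (HB n t ht hn).lineGraph.Adj (fB n t ht hn a) (fB n t ht hn b) ↔ _
  rw [SimpleGraph.lineGraph_adj_iff_exists, toep_adj]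
  have hne : (fB n t ht hn a ≠ fB n t ht hn b) ↔ a ≠ b := by
    constructor
    · intro h hab; exact h (by rw [hab])
    · intro h hab; exact h ((fB_bij n t ht hn).1 hab)
  have hsh : (∃ v, v ∈ (↑(fB n t ht hn a) : Sym2 (Fin t × Fin 5)) ∧
      v ∈ (↑(fB n t ht hn b) : Sym2 (Fin t × Fin 5))) ↔
      ((a : ℕ) % t = (b : ℕ) % t ∧
        ((a : ℕ) / t ≤ (b : ℕ) / t + 2 ∧ (b : ℕ) / t ≤ (a : ℕ) / t + 2)) := by
    show (∃ v, v ∈ BE n t ht hn a ∧ v ∈ BE n t ht hn b) ↔ _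
    simp only [BE, Sym2.mem_iff]
    constructor
    · rintro ⟨v, hva, hvb⟩
      have hmod : (a : ℕ) % t = (b : ℕ) % t := by
        rcases hva with rfl | rfl <;> rcases hvb with h | h <;>
          exact congrArg Fin.val (congrArg Prod.fst h : rB n t ht a = rB n t ht b)
      refine ⟨hmod, ?_⟩
      have := (bp_touch (qB n t hn a) (qB n t hn b)).mp ?_
      · exact this
      · rcases hva with rfl | rfl <;> rcases hvb with h | h
        · exact Or.inl (Or.inl (congrArg Prod.snd h))
        · exact Or.inl (Or.inr (congrArg Prod.snd h))
        · exact Or.inr (Or.inl (congrArg Prod.snd h))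
        · exact Or.inr (Or.inr (congrArg Prod.snd h))
    · rintro ⟨hmod, htc⟩
      have htc' := (bp_touch (qB n t hn a) (qB n t hn b)).mpr htc
      have hf : rB n t ht a = rB n t ht b := Fin.ext hmod
      rcases htc' with (h | h) | (h | h)
      · exact ⟨_, Or.inl rfl, Or.inl (Prod.ext hf h)⟩
      · exact ⟨_, Or.inl rfl, Or.inr (Prod.ext hf h)⟩
      · exact ⟨_, Or.inr rfl, Or.inl (Prod.ext hf h)⟩
      · exact ⟨_, Or.inr rfl, Or.inr (Prod.ext hf h)⟩
  rw [hne, hsh]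
  constructor
  · rintro ⟨hab, hmod, hd⟩
    rw [modeq_iff2 t a b ht]
    exact ⟨hab, hmod, fun hv => hab (Fin.ext hv), hd.1, hd.2⟩
  · rintro ⟨hab, hm⟩
    rw [modeq_iff2 t a b ht] at hm
    exact ⟨hab, hm.1, hm.2.2⟩


section Fwd
variable {n k t : ℕ} {W : Type} {H : SimpleGraph W}
  (φ : toeplitzGraph n k (fun i => i * t) ≃g H.lineGraph)

lemma ne_F {x y : Fin n} (h : x ≠ y) : (↑(φ x) : Sym2 W) ≠ ↑(φ y) :=
  fun he => h (φ.injective (Subtype.ext he))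

lemma shares_F {x y : Fin n} (h : (toeplitzGraph n k (fun i => i * t)).Adj x y) :
    Shares (↑(φ x) : Sym2 W) ↑(φ y) := by
  have := φ.map_adj_iff.mpr h
  rw [SimpleGraph.lineGraph_adj_iff_exists] at this
  exact this.2

lemma not_shares_F {x y : Fin n} (hne : x ≠ y)
    (h : ¬ (toeplitzGraph n k (fun i => i * t)).Adj x y) :
    ¬ Shares (↑(φ x) : Sym2 W) ↑(φ y) := by
  intro hs
  apply h
  rw [← φ.map_adj_iff, SimpleGraph.lineGraph_adj_iff_exists]
  exact ⟨fun he => hne (φ.injective he), hs⟩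

end Fwd

def vtx (n t j : ℕ) (h : j * t < n) : Fin n := ⟨j * t, h⟩

lemma fwd2 {n t : ℕ} (ht : 0 < t) (hn : 5 * t + 1 ≤ n) {W : Type} {H : SimpleGraph W}
    (φ : toeplitzGraph n 2 (fun i => i * t) ≃g H.lineGraph) : False := by
  set G := toeplitzGraph n 2 (fun i => i * t) with hG
  have hv : ∀ j : ℕ, j ≤ 5 → j * t < n := by
    intro j hj
    have : j * t ≤ 5 * t := Nat.mul_le_mul_right t hj
    omega
  have hvne : ∀ (a b : ℕ) (ha : a * t < n) (hb : b * t < n), a < b →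
      vtx n t a ha ≠ vtx n t b hb := by
    intro a b ha hb hab he
    have h2 := congrArg Fin.val he
    simp only [vtx] at h2
    have : a * t < b * t := (Nat.mul_lt_mul_right ht).mpr hab
    omega
  have hadj : ∀ (a b : ℕ) (ha : a * t < n) (hb : b * t < n), a < b → b ≤ a + 2 →
      G.Adj (vtx n t a ha) (vtx n t b hb) := by
    intro a b ha hb h1 h2
    rw [hG, toep_adj]
    refine ⟨hvne a b ha hb h1, b - a, by omega, by omega, Or.inr ?_⟩
    show b * t = a * t + (b - a) * t
    have e : (b - a) * t + a * t = b * t := by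
      rw [← Nat.add_mul]; congr 1; omega
    omega
  have hnadj : ∀ (a b : ℕ) (ha : a * t < n) (hb : b * t < n), a ≤ 5 → b ≤ 5 → a + 3 ≤ b →
      ¬ G.Adj (vtx n t a ha) (vtx n t b hb) := by
    intro a b ha hb ha5 hb5 h1 hcon
    rw [hG, toep_adj] at hcon
    obtain ⟨-, m, hm1, hm2, hm3⟩ := hcon
    simp only [vtx] at hm3
    interval_cases m <;>
      · interval_cases a <;> interval_cases b <;> omega
  have h0 := hv 0 (by omega)
  have h1 := hv 1 (by omega)
  have h2 := hv 2 (by omega)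
  have h3 := hv 3 (by omega)
  have h4 := hv 4 (by omega)
  have h5 := hv 5 (by omega)
  exact no_p62
    (ne_F φ (hvne 2 3 h2 h3 (by omega)))
    (shares_F φ (hadj 0 2 h0 h2 (by omega) (by omega)))
    (shares_F φ (hadj 1 2 h1 h2 (by omega) (by omega)))
    (shares_F φ (hadj 1 3 h1 h3 (by omega) (by omega)))
    (shares_F φ (hadj 2 3 h2 h3 (by omega) (by omega)))
    (shares_F φ (hadj 2 4 h2 h4 (by omega) (by omega)))
    (shares_F φ (hadj 3 4 h3 h4 (by omega) (by omega)))
    (shares_F φ (hadj 3 5 h3 h5 (by omega) (by omega)))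
    (not_shares_F φ (hvne 0 3 h0 h3 (by omega)) (hnadj 0 3 h0 h3 (by omega) (by omega) (by omega)))
    (not_shares_F φ (hvne 0 4 h0 h4 (by omega)) (hnadj 0 4 h0 h4 (by omega) (by omega) (by omega)))
    (not_shares_F φ (hvne 1 4 h1 h4 (by omega)) (hnadj 1 4 h1 h4 (by omega) (by omega) (by omega)))
    (not_shares_F φ (hvne 1 5 h1 h5 (by omega)) (hnadj 1 5 h1 h5 (by omega) (by omega) (by omega)))
    (not_shares_F φ (hvne 2 5 h2 h5 (by omega)) (hnadj 2 5 h2 h5 (by omega) (by omega) (by omega)))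

lemma fwd3 {n k t : ℕ} (ht : 0 < t) (hk : 3 ≤ k) (hn : (k + 1) * t + 1 ≤ n)
    {W : Type} {H : SimpleGraph W}
    (φ : toeplitzGraph n k (fun i => i * t) ≃g H.lineGraph) : False := by
  obtain ⟨l, rfl⟩ : ∃ l, k = l + 3 := ⟨k - 3, by omega⟩
  set G := toeplitzGraph n (l + 3) (fun i => i * t) with hG
  have hv : ∀ c : ℕ, c ≤ l + 4 → c * t < n := by
    intro c hc
    have e1 : c * t ≤ (l + 4) * t := Nat.mul_le_mul_right t hc
    have e2 : (l + 3 + 1) * t = (l + 4) * t := by ring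
    omega
  have hvne : ∀ (a b : ℕ) (ha : a * t < n) (hb : b * t < n), a < b →
      vtx n t a ha ≠ vtx n t b hb := by
    intro a b ha hb hab he
    have h2 := congrArg Fin.val he
    simp only [vtx] at h2
    have : a * t < b * t := (Nat.mul_lt_mul_right ht).mpr hab
    omega
  have hadj : ∀ (a b : ℕ) (ha : a * t < n) (hb : b * t < n), a < b → b ≤ a + (l + 3) →
      G.Adj (vtx n t a ha) (vtx n t b hb) := by
    intro a b ha hb h1 h2
    rw [hG, toep_adj]
    refine ⟨hvne a b ha hb h1, b - a, by omega, by omega, Or.inr ?_⟩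
    show b * t = a * t + (b - a) * t
    have e : (b - a) * t + a * t = b * t := by
      rw [← Nat.add_mul]; congr 1; omega
    omega
  have h0 := hv 0 (by omega)
  have h1 := hv 1 (by omega)
  have h2 := hv 2 (by omega)
  have h3 := hv 3 (by omega)
  have h4 := hv (l + 4) (by omega)
  have hnadjUW : ¬ G.Adj (vtx n t 0 h0) (vtx n t (l + 4) h4) := by
    intro hcon
    rw [hG, toep_adj] at hcon
    obtain ⟨-, m, hm1, hm2, hm3⟩ := hcon
    simp only [vtx] at hm3
    have hm3' : (l + 4) * t = m * t := by omega
    have : l + 4 = m := Nat.eq_of_mul_eq_mul_right ht hm3'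
    omega
  exact no_k5e
    (ne_F φ (hvne 1 2 h1 h2 (by omega)))
    (ne_F φ (hvne 1 3 h1 h3 (by omega)))
    (ne_F φ (hvne 2 3 h2 h3 (by omega)))
    (ne_F φ (hvne 0 1 h0 h1 (by omega)))
    (ne_F φ (hvne 0 2 h0 h2 (by omega)))
    (ne_F φ (hvne 0 3 h0 h3 (by omega)))
    (ne_F φ (hvne 0 (l + 4) h0 h4 (by omega)))
    (shares_F φ (hadj 1 2 h1 h2 (by omega) (by omega)))
    (shares_F φ (hadj 2 3 h2 h3 (by omega) (by omega)))
    (shares_F φ (hadj 1 3 h1 h3 (by omega) (by omega)))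
    (shares_F φ (hadj 0 1 h0 h1 (by omega) (by omega)))
    (shares_F φ (hadj 0 2 h0 h2 (by omega) (by omega)))
    (shares_F φ (hadj 0 3 h0 h3 (by omega) (by omega)))
    (shares_F φ (hadj 1 (l + 4) h1 h4 (by omega) (by omega)).symm)
    (shares_F φ (hadj 2 (l + 4) h2 h4 (by omega) (by omega)).symm)
    (shares_F φ (hadj 3 (l + 4) h3 h4 (by omega) (by omega)).symm)
    (not_shares_F φ (hvne 0 (l + 4) h0 h4 (by omega)) hnadjUW)


/-- The `(n,k,t)`-cocoonery `T_n⟨t, 2t, …, kt⟩` (with `k ≥ 2`,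
`n > kt`) is a line graph iff either `k = 2` and `2t + 1 ≤ n ≤ 5t`, or `k ≥ 3` and
`kt + 1 ≤ n ≤ (k+1)t`. -/
theorem stmt_17 (n k t : ℕ) (hk : 2 ≤ k) (ht : 0 < t) (hn : k * t < n) :
    (∃ (W : Type) (H : SimpleGraph W),
        Nonempty (toeplitzGraph n k (fun i => i * t) ≃g H.lineGraph)) ↔
      ((k = 2 ∧ 2 * t + 1 ≤ n ∧ n ≤ 5 * t) ∨
       (3 ≤ k ∧ k * t + 1 ≤ n ∧ n ≤ (k + 1) * t)) := by
  constructor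
  · rintro ⟨W, H, ⟨φ⟩⟩
    by_contra hR
    have hkt : (k + 1) * t = k * t + t := by ring
    rcases Nat.lt_or_ge k 3 with hk3 | hk3
    · have hk2 : k = 2 := by omega
      subst hk2
      have h5 : 5 * t + 1 ≤ n := by
        by_contra h
        exact hR (Or.inl ⟨rfl, by omega, by omega⟩)
      exact fwd2 ht h5 φ
    · have h5 : (k + 1) * t + 1 ≤ n := by
        by_contra h
        exact hR (Or.inr ⟨hk3, by omega, by omega⟩)
      exact fwd3 ht hk3 h5 φ
  · rintro (⟨rfl, h1, h2⟩ | ⟨hk3, h1, h2⟩)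
    · exact consB n t ht h2
    · exact consA n k t ht h2
end
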